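/- arXiv:2308.13023 — 6 statements merged into one kernel-verified Lean document; each statement's English description precedes it below -/
import Mathlib

section
/- Let G be a Polish group and X a Polish G-space. Some G-orbit is comeager in X if and only if there is a dense set D ⊆ X such that D is contained in a single G-orbit and, for every open neighborhood V of the identity of G and every x ∈ D, the set V·x = {g·x : g ∈ V} is dense in some open neighborhood of x. -/
/-!
If the orbit of `y` is comeager, cover `G` by countably many translates `g • W` of a symmetric
neighbourhood `W` of `1` with `W * W ⊆ V` (Lindelöf). Some translate of `W • y`, hence `W • y`
itself, is not meagre, so the interior of its closure contains some `h • y` with `h ∈ W`;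
translating by `h⁻¹` puts `y` in the interior of the closure of `(h⁻¹ • W) • y ⊆ V • y`.

Conversely, by translation the orbit map `f = (· • d)` of a point `d ∈ D` sends every open `W ∋ g`
into a set whose closure is a neighbourhood of `f g`. Fix a complete metric and a countable basis
`B` on `G`. For basic `V` and `n : ℕ`, the points of `cl f(V)` outside the open union `O` of the
sets `int cl f(V')` over basic `V'` with `cl V' ⊆ V`, `diam V' ≤ 2⁻ⁿ` lie in the nowhere dense
frontier of `O`. Off these countably many frontiers, every `y` lies in `cl f(Vₙ)` for a nested
sequence of basic sets `Vₙ` with `diam Vₙ → 0`; they shrink to a point `g`, and `f g = y`.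
-/

open Set Filter Topology Metric TopologicalSpace MulAction Bornology Pointwise

lemma IsOpen.isNowhereDense_frontier {X : Type*} [TopologicalSpace X] {s : Set X}
    (hs : IsOpen s) : IsNowhereDense (frontier s) := by
  rw [isClosed_frontier.isNowhereDense_iff, ← frontier_compl]
  exact interior_frontier hs.isClosed_compl

lemma exists_seq_of_exists_step {α : Type*} {P : ℕ → α → Prop} {r : α → α → Prop}
    (h₀ : ∃ a, P 0 a) (hstep : ∀ n a, P n a → ∃ b, P (n + 1) b ∧ r b a) :
    ∃ s : ℕ → α, ∀ n, P n (s n) ∧ r (s (n + 1)) (s n) := by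
  choose a₀ ha₀ using h₀
  choose next hnextP hnextr using hstep
  let s : (n : ℕ) → {a // P n a} := fun n =>
    Nat.rec ⟨a₀, ha₀⟩ (fun n a => ⟨next n a a.2, hnextP n a a.2⟩) n
  exact ⟨fun n => (s n).1, fun n => ⟨(s n).2, hnextr n (s n).1 (s n).2⟩⟩

section PseudoMetric

variable {G X : Type*} [PseudoMetricSpace G] [TopologicalSpace X] {f : G → X}

lemma TopologicalSpace.IsTopologicalBasis.exists_mem_closure_subset_diam_le {B : Set (Set G)}
    (hB : IsTopologicalBasis B) {g : G} {V : Set G} (hV : V ∈ 𝓝 g) {ε : ℝ} (hε : 0 < ε) :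
    ∃ V' ∈ B, g ∈ V' ∧ closure V' ⊆ V ∧ IsBounded V' ∧ diam V' ≤ ε := by
  obtain ⟨r, hr, hrV⟩ := nhds_basis_closedBall.mem_iff.1 hV
  set r' := min r (ε / 2)
  obtain ⟨V', hV'B, hgV', hV'⟩ :=
    hB.mem_nhds_iff.1 (ball_mem_nhds g (lt_min hr (half_pos hε)))
  refine ⟨V', hV'B, hgV', ?_, isBounded_ball.subset hV', ?_⟩
  · calc closure V' ⊆ closedBall g r' := (closure_mono hV').trans closure_ball_subset_closedBall
      _ ⊆ V := (closedBall_subset_closedBall (min_le_left _ _)).trans hrV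
  · calc diam V' ≤ diam (ball g r') := diam_mono hV' isBounded_ball
      _ ≤ 2 * r' := diam_ball (by positivity)
      _ ≤ ε := by linarith [min_le_right r (ε / 2)]

lemma mem_range_of_forall_mem_closure_image [CompleteSpace G] [T2Space X] (hf : Continuous f)
    {V : ℕ → Set G} (hnest : ∀ n, closure (V (n + 1)) ⊆ V n) (hbdd : ∀ n, IsBounded (V n))
    (hdiam : Tendsto (fun n => diam (V n)) atTop (𝓝 0)) {y : X}
    (hy : ∀ n, y ∈ closure (f '' V n)) : y ∈ range f := by
  have hanti : Antitone fun n => closure (V n) :=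
    antitone_nat_of_succ_le fun n => (hnest n).trans subset_closure
  have hne : ∀ n, (closure (V n)).Nonempty := fun n =>
    (image_nonempty.1 (Nonempty.of_closure ⟨y, hy n⟩)).closure
  obtain ⟨g, hg⟩ := nonempty_iInter_of_nonempty_biInter (fun n => isClosed_closure)
    (fun n => (hbdd n).closure) (fun N => (hne N).mono (subset_iInter₂ fun n hn => hanti hn))
    (by simpa only [diam_closure] using hdiam)
  rw [mem_iInter] at hg
  by_contra hyf
  obtain ⟨u, v, hu, hv, hgu, hyv, huv⟩ := t2_separation fun h : f g = y => hyf ⟨g, h⟩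
  obtain ⟨r, hr, hru⟩ :=
    nhds_basis_ball.mem_iff.1 (hf.continuousAt.preimage_mem_nhds (hu.mem_nhds hgu))
  obtain ⟨n, hn⟩ := (hdiam.eventually (gt_mem_nhds hr)).exists
  have hVu : f '' V n ⊆ u := by
    rintro _ ⟨w, hw, rfl⟩
    exact hru (lt_of_le_of_lt
      (dist_le_diam_of_mem (hbdd n).closure (subset_closure hw) (hg n)) (by rwa [diam_closure]))
  obtain ⟨z, hzv, hzV⟩ := mem_closure_iff.1 (hy n) v hv hyv
  exact huv.ne_of_mem (hVu hzV) hzv rfl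

lemma eventually_residual_exists_small_refinement
    (hloc : ∀ W : Set G, IsOpen W → ∀ g ∈ W, f g ∈ interior (closure (f '' W)))
    {B : Set (Set G)} (hB : IsTopologicalBasis B) {V : Set G} (hV : IsOpen V) {ε : ℝ}
    (hε : 0 < ε) :
    ∀ᶠ y in residual X, y ∈ closure (f '' V) →
      ∃ V', (V' ∈ B ∧ IsBounded V' ∧ diam V' ≤ ε ∧ y ∈ closure (f '' V')) ∧ closure V' ⊆ V := by
  set O : Set X :=
    ⋃ V' ∈ {V' ∈ B | closure V' ⊆ V ∧ IsBounded V' ∧ diam V' ≤ ε}, interior (closure (f '' V'))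
  have hO : IsOpen O := isOpen_biUnion fun _ _ => isOpen_interior
  have himage : f '' V ⊆ O := by
    rintro _ ⟨g, hg, rfl⟩
    obtain ⟨V', hV'B, hgV', hV'⟩ := hB.exists_mem_closure_subset_diam_le (hV.mem_nhds hg) hε
    exact mem_biUnion ⟨hV'B, hV'⟩ (hloc V' (hB.isOpen hV'B) g hgV')
  filter_upwards [hO.isNowhereDense_frontier.isMeagre] with y hy hyV
  have hyO : y ∈ O := by
    by_contra hyO
    exact hy (hO.frontier_eq ▸ ⟨closure_mono himage hyV, hyO⟩)
  obtain ⟨V', ⟨hV'B, hV'V, hbdd, hdiam⟩, hyV'⟩ := mem_iUnion₂.1 hyO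
  exact ⟨V', ⟨hV'B, hbdd, hdiam, interior_subset hyV'⟩, hV'V⟩

theorem range_mem_residual_of_mem_interior_closure_image [CompleteSpace G]
    [SecondCountableTopology G] [T2Space X] (hf : Continuous f) (hdense : DenseRange f)
    (hloc : ∀ W : Set G, IsOpen W → ∀ g ∈ W, f g ∈ interior (closure (f '' W))) :
    range f ∈ residual X := by
  obtain ⟨B, hBc, -, hB⟩ := exists_countable_basis G
  have hBopen : ∀ V ∈ insert univ B, IsOpen V := by
    rintro V (rfl | hV)
    exacts [isOpen_univ, hB.isOpen hV]
  filter_upwards [eventually_countable_forall.2 fun n : ℕ =>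
    (eventually_countable_ball (hBc.insert univ)).2 fun V hV =>
      eventually_residual_exists_small_refinement hloc hB (hBopen V hV)
        (pow_pos one_half_pos n)] with y hy
  obtain ⟨V, hV⟩ := exists_seq_of_exists_step
    (P := fun n V => V ∈ B ∧ IsBounded V ∧ diam V ≤ (1 / 2) ^ n ∧ y ∈ closure (f '' V))
    (r := fun V' V => closure V' ⊆ V)
    ((hy 0 univ (mem_insert _ _) (by rw [image_univ, hdense.closure_range]; trivial)).imp
      fun _ h => h.1)
    fun n V hV => hy (n + 1) V (mem_insert_of_mem _ hV.1) hV.2.2.2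
  exact mem_range_of_forall_mem_closure_image hf (fun n => (hV n).2) (fun n => (hV n).1.2.1)
    (squeeze_zero (fun n => diam_nonneg) (fun n => (hV n).1.2.2.1)
      (tendsto_pow_atTop_nhds_zero_of_lt_one (by norm_num) (by norm_num)))
    fun n => (hV n).1.2.2.2

end PseudoMetric

section GroupAction

variable {G X : Type*} [Group G] [MulAction G X]

lemma smul_set_image_smul (g : G) (W : Set G) (y : X) :
    g • ((· • y) '' W) = (· • y) '' (g • W) := by
  simp only [← image_smul, image_image, smul_eq_mul, mul_smul]

variable [TopologicalSpace X] [ContinuousConstSMul G X]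

lemma IsMeagre.smul_set {s : Set X} (hs : IsMeagre s) (g : G) : IsMeagre (g • s) := by
  rw [← image_smul]
  exact (Homeomorph.smul g).isInducing.isMeagre_image hs

variable [TopologicalSpace G]

lemma smul_mem_interior_closure_image_smul [ContinuousConstSMul G G] {y : X}
    (hy : ∀ V : Set G, IsOpen V → (1 : G) ∈ V → y ∈ interior (closure ((· • y) '' V)))
    {W : Set G} (hW : IsOpen W) {g : G} (hg : g ∈ W) :
    g • y ∈ interior (closure ((· • y) '' W)) := by
  have := hy (g⁻¹ • W) (hW.smul _)
    (by rwa [mem_smul_set_iff_inv_smul_mem, inv_inv, smul_eq_mul, mul_one])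
  rwa [← smul_set_image_smul, closure_smul, interior_smul, mem_smul_set_iff_inv_smul_mem,
    inv_inv] at this

variable [IsTopologicalGroup G] [LindelofSpace G]

lemma not_isMeagre_image_smul_of_mem_nhds_one {y : X} (hy : ¬IsMeagre (orbit G y))
    {W : Set G} (hW : W ∈ 𝓝 1) : ¬IsMeagre ((· • y) '' W) := by
  obtain ⟨s, hs, hcover⟩ := countable_cover_nhds fun g : G => smul_mem_nhds_self.2 hW
  refine fun hmeagre => hy ((isMeagre_biUnion hs fun g _ => hmeagre.smul_set g).mono ?_)
  rintro _ ⟨h, rfl⟩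
  obtain ⟨g, hg, hh⟩ := mem_iUnion₂.1 (hcover.symm ▸ mem_univ h)
  exact mem_biUnion hg (by rw [smul_set_image_smul]; exact mem_image_of_mem _ hh)

lemma mem_interior_closure_image_smul_of_not_isMeagre {y : X} (hy : ¬IsMeagre (orbit G y))
    {V : Set G} (hV : V ∈ 𝓝 1) : y ∈ interior (closure ((· • y) '' V)) := by
  obtain ⟨W, hW, -, hWinv, hWV⟩ := exists_closed_nhds_one_inv_eq_mul_subset hV
  obtain ⟨_, hhT, h, hhW, rfl⟩ :
      (interior (closure ((· • y) '' W)) ∩ (· • y) '' W).Nonempty := by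
    obtain ⟨z, hz⟩ := nonempty_iff_ne_empty.2 fun h =>
      not_isMeagre_image_smul_of_mem_nhds_one hy hW (IsNowhereDense.isMeagre h)
    exact mem_closure_iff.1 (interior_subset hz) _ isOpen_interior hz
  have hhW' : h⁻¹ • W ⊆ V := (smul_set_subset_mul (hWinv ▸ inv_mem_inv.2 hhW)).trans hWV
  have hy' : y ∈ h⁻¹ • interior (closure ((· • y) '' W)) := by
    rwa [mem_smul_set_iff_inv_smul_mem, inv_inv]
  rw [← interior_smul, ← closure_smul, smul_set_image_smul] at hy'
  exact interior_mono (closure_mono (image_mono hhW')) hy'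

end GroupAction

/-- Let `G` be a Polish group and `X` a Polish `G`-space.  Some `G`-orbit is comeager in `X`
if and only if there is a dense set `D ⊆ X` contained in a single `G`-orbit such that for
every open neighborhood `V` of `1` in `G` and every `x ∈ D`, the set `V • x = {g • x : g ∈ V}`
is dense in some open neighborhood of `x`. -/
theorem comeager_orbit_iff_dense_local_orbits {G X : Type*} [Group G] [TopologicalSpace G]
    [IsTopologicalGroup G] [PolishSpace G] [TopologicalSpace X] [PolishSpace X] [MulAction G X]
    [ContinuousSMul G X] :
    (∃ x : X, MulAction.orbit G x ∈ residual X) ↔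
      ∃ D : Set X, Dense D ∧ (∃ x₀ : X, D ⊆ MulAction.orbit G x₀) ∧
        ∀ V : Set G, IsOpen V → (1 : G) ∈ V → ∀ x ∈ D,
          ∃ U : Set X, IsOpen U ∧ x ∈ U ∧ U ⊆ closure ((fun g : G => g • x) '' V) := by
  constructor
  · rintro ⟨x, hx⟩
    have : Nonempty X := ⟨x⟩
    refine ⟨orbit G x, dense_of_mem_residual hx, ⟨x, subset_rfl⟩,
      fun V hV h1 y hy => ⟨_, isOpen_interior, ?_, interior_subset⟩⟩
    rw [← orbit_eq_iff.2 hy] at hx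
    exact mem_interior_closure_image_smul_of_not_isMeagre (not_isMeagre_of_mem_residual hx)
      (hV.mem_nhds h1)
  · rintro ⟨D, hD, ⟨x₀, hDx₀⟩, hloc⟩
    have : Nonempty X := ⟨x₀⟩
    obtain ⟨d, hd⟩ := hD.nonempty
    rw [← orbit_eq_iff.2 (hDx₀ hd)] at hDx₀
    let := upgradeIsCompletelyMetrizable G
    refine ⟨d, range_mem_residual_of_mem_interior_closure_image
      (continuous_id.smul continuous_const) (hD.mono hDx₀)
      fun W hW g hg => smul_mem_interior_closure_image_smul (fun V hV h1 => ?_) hW hg⟩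
    obtain ⟨U, hU, hdU, hUV⟩ := hloc V hV h1 d hd
    exact mem_interior.2 ⟨U, hUV, hU, hdU⟩
end

section
/- Let G be a Polish group with a compatible metric and X a Polish G-space with a compatible metric. For each n ∈ ℕ let H_n be a Polish group with a compatible metric acting continuously on a Polish metric space X_n; let i_n^{n+1} : H_n → H_{n+1} be continuous group homomorphisms and f_n^{n+1} : X_n → X_{n+1} continuous injective maps satisfying f_n^{n+1}(h·x) = i_n^{n+1}(h)·f_n^{n+1}(x) for all h ∈ H_n, x ∈ X_n; write i_j^n and f_j^n for the compositions (with i_j^j, f_j^j the identities). Suppose there are continuous group homomorphisms ı_n : H_n → G with ı_{n+1} ∘ i_n^{n+1} = ı_n and with ∪_n ı_n[H_n] dense in G, and continuous maps φ_n : X_n → X with φ_{n+1} ∘ f_n^{n+1} = φ_n, φ_n(h·x) = ı_n(h)·φ_n(x) for all h ∈ H_n, x ∈ X_n, and with ∪_n φ_n[X_n] dense in X. Let y ∈ X₀ be such that the orbit H_n·f_0^n(y) is dense in X_n for every n, and let J ∈ ℕ. Assume: for every ε > 0, every j ≥ J and every g ∈ H_j there exists a sequence (α_n)_{n≥j} of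 positive reals such that (1) for every n ≥ j the set {h·(i_j^n(g)·f_0^n(y)) : h ∈ H_n, d_{H_n}(h,1) < mod(ı_n,1,ε)} is dense in the open ball B_{X_n}(i_j^n(g)·f_0^n(y), α_n), and (2) inf{comod(φ_n, i_j^n(g)·f_0^n(y), α_n) : n ≥ j} > 0. Then the orbit G·φ₀(y) is comeager in X. -/
/-!
Fix a complete compatible metric on `G` (the given one need not be complete), and let
`x₀ = φ₀(y)` and `Γ = ⋃_{j ≥ J} ιⱼ[Hⱼ]`. The orbit `G • x₀` is comeager as soon as `Γ • x₀` is
dense and, for all `γ ∈ Γ` and neighbourhoods `V ∋ γ`, the closure of `(Γ ∩ V) • x₀` is a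
neighbourhood of `γ • x₀`: choosing, level by level, maximal disjoint families of balls
`B(γ • x₀, ρ)` gives, for every `x` off a meagre set, a chain of such balls around `x` with
`ρₘ → 0` and `γₘ₊₁` so close to `γₘ` that `γₘ → γ`; then `x = γ • x₀`.

Density of `Γ • x₀` comes from the dense `Hₙ`-orbits of `f₀ⁿ(y)` and the density of `⋃ φₙ[Xₙ]`.
For the second condition write `γ = ιⱼ(g)` and take `ε` so small that `d(u, 1) < ε` forces
`uγ ∈ V`. Condition (1) makes the translates of `zₙ = i_j^n(g) • f₀ⁿ(y)` by the `h` with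
`ιₙ(h)` `ε`-close to `1` dense near `zₙ`; as `φₙ(zₙ) = γ • x₀`, the uniform comodulus bound (2)
transfers this to `B(γ • x₀, c) ∩ φₙ[Xₙ]` for one radius `c` independent of `n`, and these sets
are jointly dense in `B(γ • x₀, c)`.
-/

noncomputable section

/-- The set of radii `δ > 0` witnessing the modulus of continuity of `f` at `x` for `ε`:
`mod(f,x,ε) = sup {δ > 0 : f[B(x,δ)] ⊆ B(f x, ε)}` is the supremum of this set.
(The set is downward closed, so `r < mod(f,x,ε)` iff `∃ δ ∈ modSet f x ε, r < δ`.) -/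
def modSet {X Y : Type*} [MetricSpace X] [MetricSpace Y] (f : X → Y) (x : X) (ε : ℝ) :
    Set ℝ :=
  {δ : ℝ | 0 < δ ∧ f '' Metric.ball x δ ⊆ Metric.ball (f x) ε}

/-- The set of radii `δ > 0` witnessing the co-modulus of `f` at `x` for `ε`:
`comod(f,x,ε) = sup {δ > 0 : B(f x, δ) ∩ f[X] ⊆ f[B(x,ε)]}` is the supremum of this set.
(The set is downward closed, so `comod(f,x,ε) ≥ c > 0` iff `∃ δ ∈ comodSet f x ε, c/2 ≤ δ`,
up to rescaling the positive constant `c`.) -/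
def comodSet {X Y : Type*} [MetricSpace X] [MetricSpace Y] (f : X → Y) (x : X) (ε : ℝ) :
    Set ℝ :=
  {δ : ℝ | 0 < δ ∧ Metric.ball (f x) δ ∩ Set.range f ⊆ f '' Metric.ball x ε}

/-- The composite map `X₀ → Xₙ` along a chain of maps `Xₙ → Xₙ₊₁`. -/
def f0Comp {T : ℕ → Type*} (s : ∀ n, T n → T (n + 1)) : (n : ℕ) → T 0 → T n
  | 0 => id
  | n + 1 => fun a => s n (f0Comp s n a)

/-- The composite map `X_j → X_{j+k}` along a chain of maps `Xₙ → Xₙ₊₁`. -/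
def chainComp {T : ℕ → Type*} (s : ∀ n, T n → T (n + 1)) (j : ℕ) : (k : ℕ) → T j → T (j + k)
  | 0 => id
  | k + 1 => fun a => s (j + k) (chainComp s j k a)

open Set Filter Topology Metric TopologicalSpace

section Compat

variable {T : ℕ → Type*} {Z : Type*} (s : ∀ n, T n → T (n + 1)) {φ : ∀ n, T n → Z}

theorem apply_f0Comp_of_compat (hφ : ∀ n a, φ (n + 1) (s n a) = φ n a) (n : ℕ) (a : T 0) :
    φ n (f0Comp s n a) = φ 0 a := by
  induction n with
  | zero => rfl
  | succ n ih => exact (hφ n _).trans ih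

theorem apply_chainComp_of_compat (hφ : ∀ n a, φ (n + 1) (s n a) = φ n a) (j k : ℕ) (a : T j) :
    φ (j + k) (chainComp s j k a) = φ j a := by
  induction k with
  | zero => rfl
  | succ k ih => exact (hφ (j + k) _).trans ih

theorem monotone_range_of_compat (hφ : ∀ n a, φ (n + 1) (s n a) = φ n a) :
    Monotone fun n => range (φ n) :=
  monotone_nat_of_le_succ fun n => by
    rintro _ ⟨a, rfl⟩
    exact ⟨s n a, hφ n a⟩

theorem dense_iUnion_range_add_of_compat [TopologicalSpace Z]
    (hφ : ∀ n a, φ (n + 1) (s n a) = φ n a) (hdense : Dense (⋃ n, range (φ n))) (j : ℕ) :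
    Dense (⋃ k, range (φ (j + k))) :=
  hdense.mono (iUnion_mono fun n => monotone_range_of_compat s hφ (Nat.le_add_left n j))

end Compat

section MaximalDisjoint

variable {Y ι : Type*}

theorem exists_maximal_pairwiseDisjoint_subset (U : ι → Set Y) (C : Set ι) :
    ∃ A ⊆ C, A.PairwiseDisjoint U ∧ ∀ b ∈ C, (∀ a ∈ A, Disjoint (U b) (U a)) → b ∈ A := by
  obtain ⟨A, hA⟩ := zorn_subset {A | A ⊆ C ∧ A.PairwiseDisjoint U} fun c hc hchain =>
    ⟨⋃₀ c, ⟨sUnion_subset fun s hs => (hc hs).1,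
      (pairwiseDisjoint_sUnion hchain.directedOn).2 fun s hs => (hc hs).2⟩,
      fun _ => subset_sUnion_of_mem⟩
  refine ⟨A, hA.prop.1, hA.prop.2, fun b hb hdisj => ?_⟩
  have hins : insert b A ∈ {A | A ⊆ C ∧ A.PairwiseDisjoint U} :=
    ⟨insert_subset hb hA.prop.1, hA.prop.2.insert fun a ha _ => hdisj a ha⟩
  exact hA.eq_of_subset hins (subset_insert b A) ▸ mem_insert b A

variable [TopologicalSpace Y]

theorem dense_biUnion_of_maximal_pairwiseDisjoint {U : ι → Set Y} {A C : Set ι}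
    (hmax : ∀ b ∈ C, (∀ a ∈ A, Disjoint (U b) (U a)) → b ∈ A)
    (hC : ∀ O, IsOpen O → O.Nonempty → ∃ c ∈ C, (U c).Nonempty ∧ U c ⊆ O) :
    Dense (⋃ a ∈ A, U a) := by
  refine dense_iff_inter_open.2 fun O hO hne => ?_
  obtain ⟨c, hc, ⟨z, hz⟩, hcO⟩ := hC O hO hne
  by_cases hdisj : ∀ a ∈ A, Disjoint (U c) (U a)
  · exact ⟨z, hcO hz, mem_biUnion (hmax c hc hdisj) hz⟩
  · push Not at hdisj
    obtain ⟨a, ha, hca⟩ := hdisj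
    obtain ⟨w, hwc, hwa⟩ := not_disjoint_iff.1 hca
    exact ⟨w, hcO hwc, mem_biUnion ha hwa⟩

theorem eventually_residual_exists_chain {U : ι → Set Y} (hU : ∀ t, IsOpen (U t))
    {P : ℕ → Set ι} {R : ℕ → ι → ι → Prop}
    (h₀ : ∀ O, IsOpen O → O.Nonempty → ∃ t ∈ P 0, (U t).Nonempty ∧ U t ⊆ O)
    (hsucc : ∀ m, ∀ t ∈ P m, ∀ O, IsOpen O → (O ∩ U t).Nonempty →
      ∃ t' ∈ P (m + 1), (U t').Nonempty ∧ U t' ⊆ O ∩ U t ∧ R m t t') :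
    ∀ᶠ x in residual Y, ∃ s : ℕ → ι, ∀ m, s m ∈ P m ∧ x ∈ U (s m) ∧ R m (s m) (s (m + 1)) := by
  choose pick hpickC hpickDisj hpickMax using exists_maximal_pairwiseDisjoint_subset U
  let children (m : ℕ) (S : Set ι) : Set ι := {t' ∈ P (m + 1) | ∃ t ∈ S, U t' ⊆ U t ∧ R m t t'}
  let S (m : ℕ) : Set ι := Nat.rec (pick (P 0)) (fun m Sm => pick (children m Sm)) m
  have hSP : ∀ m, S m ⊆ P m
    | 0 => hpickC _
    | m + 1 => fun t ht => (hpickC _ ht).1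
  have hSdisj : ∀ m, (S m).PairwiseDisjoint U
    | 0 => hpickDisj _
    | _ + 1 => hpickDisj _
  have hdense : ∀ m, Dense (⋃ t ∈ S m, U t) := by
    intro m
    induction m with
    | zero => exact dense_biUnion_of_maximal_pairwiseDisjoint (hpickMax _) h₀
    | succ m ih =>
      refine dense_biUnion_of_maximal_pairwiseDisjoint (hpickMax _) fun O hO hne => ?_
      obtain ⟨z, hzO, hz⟩ := ih.inter_open_nonempty O hO hne
      obtain ⟨t, ht, hzt⟩ := mem_iUnion₂.1 hz
      obtain ⟨t', ht'P, hne', hsub, hR⟩ := hsucc m t (hSP m ht) O hO ⟨z, hzO, hzt⟩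
      exact ⟨t', ⟨ht'P, t, ht, hsub.trans inter_subset_right, hR⟩, hne',
        hsub.trans inter_subset_left⟩
  have hres : ⋂ m, ⋃ t ∈ S m, U t ∈ residual Y := countable_iInter_mem.2 fun m =>
    residual_of_dense_open (isOpen_biUnion fun t _ => hU t) (hdense m)
  filter_upwards [hres] with x hx
  choose s hsS hxs using fun m => mem_iUnion₂.1 (mem_iInter.1 hx m)
  refine ⟨s, fun m => ⟨hSP m (hsS m), hxs m, ?_⟩⟩
  obtain ⟨-, t, ht, hsub, hR⟩ := hpickC _ (hsS (m + 1))
  -- `S m` is pairwise disjoint, so the parent of `s (m + 1)` is `s m`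
  rwa [(hSdisj m).elim_set ht (hsS m) x (hsub (hxs (m + 1))) (hxs m)] at hR

end MaximalDisjoint

theorem IsCompletelyMetrizableSpace.exists_nhds_forall_exists_tendsto (Y : Type*)
    [TopologicalSpace Y] [IsCompletelyMetrizableSpace Y] :
    ∃ W : Y → ℕ → Set Y, (∀ y m, W y m ∈ 𝓝 y) ∧
      ∀ s : ℕ → Y, (∀ m, s (m + 1) ∈ W (s m) m) → ∃ z, Tendsto s atTop (𝓝 z) := by
  let := completelyMetrizableMetric Y
  have := complete_completelyMetrizableMetric Y
  refine ⟨fun y m => ball y ((1 / 2) ^ m), fun y m => ball_mem_nhds y (by positivity),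
    fun s hs => cauchySeq_tendsto_of_complete (cauchySeq_of_le_geometric (1 / 2) 1 (by norm_num)
      fun m => ?_)⟩
  rw [one_mul, dist_comm]
  exact (hs m).le

theorem exists_pos_forall_dist_one_lt_mul_mem {G : Type*} [Group G] [PseudoMetricSpace G]
    [ContinuousMul G] {γ : G} {V : Set G} (hV : V ∈ 𝓝 γ) :
    ∃ ε > 0, ∀ u, dist u 1 < ε → u * γ ∈ V := by
  have : Tendsto (· * γ) (𝓝 1) (𝓝 γ) := by simpa using (continuous_mul_const γ).tendsto 1
  simpa [subset_def] using Metric.mem_nhds_iff.1 (this hV)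

theorem orbit_mem_residual_of_closure_image_smul_mem_nhds {G X : Type*} [TopologicalSpace G]
    [IsCompletelyMetrizableSpace G] [MetricSpace X] [SMul G X] [ContinuousSMul G X] {x₀ : X}
    {Γ : Set G} (hdense : Dense ((· • x₀) '' Γ))
    (hstep : ∀ γ ∈ Γ, ∀ V ∈ 𝓝 γ, closure ((· • x₀) '' (Γ ∩ V)) ∈ 𝓝 (γ • x₀)) :
    MulAction.orbit G x₀ ∈ residual X := by
  obtain ⟨W, hW, hWconv⟩ := IsCompletelyMetrizableSpace.exists_nhds_forall_exists_tendsto G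
  let B (t : G × ℝ) : Set X := ball (t.1 • x₀) t.2
  let P (m : ℕ) : Set (G × ℝ) := {t | t.1 ∈ Γ ∧ 0 < t.2 ∧ t.2 ≤ (1 / 2) ^ m ∧
    B t ⊆ closure ((· • x₀) '' (Γ ∩ W t.1 m))}
  have hnode : ∀ m, ∀ γ ∈ Γ, ∀ O, IsOpen O → γ • x₀ ∈ O →
      ∃ ρ, (γ, ρ) ∈ P m ∧ (B (γ, ρ)).Nonempty ∧ B (γ, ρ) ⊆ O := by
    intro m γ hγ O hO hγO
    obtain ⟨ε, hε, hεsub⟩ :=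
      Metric.mem_nhds_iff.1 (inter_mem (hO.mem_nhds hγO) (hstep γ hγ _ (hW γ m)))
    have hρ : 0 < min ε ((1 / 2) ^ m) := lt_min hε (by positivity)
    have hball : B (γ, min ε ((1 / 2) ^ m)) ⊆ O ∩ _ :=
      (ball_subset_ball (min_le_left _ _)).trans hεsub
    exact ⟨_, ⟨hγ, hρ, min_le_right _ _, hball.trans inter_subset_right⟩, nonempty_ball.2 hρ,
      hball.trans inter_subset_left⟩
  have h₀ : ∀ O, IsOpen O → O.Nonempty → ∃ t ∈ P 0, (B t).Nonempty ∧ B t ⊆ O := by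
    intro O hO hne
    obtain ⟨_, hO', γ, hγ, rfl⟩ := hdense.inter_open_nonempty O hO hne
    obtain ⟨ρ, hP, hne, hsub⟩ := hnode 0 γ hγ O hO hO'
    exact ⟨(γ, ρ), hP, hne, hsub⟩
  have hsucc : ∀ m, ∀ t ∈ P m, ∀ O, IsOpen O → (O ∩ B t).Nonempty →
      ∃ t' ∈ P (m + 1), (B t').Nonempty ∧ B t' ⊆ O ∩ B t ∧ t'.1 ∈ W t.1 m := by
    rintro m ⟨γ, ρ⟩ ⟨-, -, -, hcl⟩ O hO ⟨z, hzO, hz⟩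
    have hO' : IsOpen (O ∩ B (γ, ρ)) := hO.inter isOpen_ball
    obtain ⟨_, hz', γ', ⟨hγ', hγ'W⟩, rfl⟩ := mem_closure_iff.1 (hcl hz) _ hO' ⟨hzO, hz⟩
    obtain ⟨ρ', hP, hne, hsub⟩ := hnode (m + 1) γ' hγ' _ hO' hz'
    exact ⟨(γ', ρ'), hP, hne, hsub, hγ'W⟩
  filter_upwards [eventually_residual_exists_chain (fun _ => isOpen_ball) h₀ hsucc] with x ⟨s, hs⟩
  obtain ⟨γ, hγ⟩ := hWconv (fun m => (s m).1) fun m => (hs m).2.2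
  have hx : Tendsto (fun m => (s m).1 • x₀) atTop (𝓝 x) := by
    refine tendsto_iff_dist_tendsto_zero.2 (squeeze_zero (fun _ => dist_nonneg) (fun m => ?_)
      (tendsto_pow_atTop_nhds_zero_of_lt_one (by norm_num : (0 : ℝ) ≤ 1 / 2) (by norm_num)))
    rw [dist_comm]
    exact ((hs m).2.1.trans_le (hs m).1.2.2.1).le
  exact ⟨γ, tendsto_nhds_unique (hγ.smul_const x₀) hx⟩

theorem dist_apply_lt_of_mem_modSet {X Y : Type*} [MetricSpace X] [MetricSpace Y] {f : X → Y}
    {x x' : X} {ε δ : ℝ} (hδ : δ ∈ modSet f x ε) (hx' : dist x' x < δ) : dist (f x') (f x) < ε :=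
  hδ.2 (mem_image_of_mem f hx')

theorem ball_inter_range_subset_closure_image_of_mem_comodSet {T Y : Type*} [MetricSpace T]
    [MetricSpace Y] {φ : T → Y} (hφ : Continuous φ) {z : T} {α δ : ℝ} {A : Set T}
    (hA : ball z α ⊆ closure A) (hδ : δ ∈ comodSet φ z α) :
    ball (φ z) δ ∩ range φ ⊆ closure (φ '' A) :=
  hδ.2.trans ((image_mono hA).trans (image_closure_subset_closure_image hφ))

theorem dense_image_smul_iUnion_range {G X : Type*} [Group G] [TopologicalSpace X] [MulAction G X]
    {H Xn : ℕ → Type*} [∀ n, Group (H n)] [∀ n, TopologicalSpace (Xn n)]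
    [∀ n, MulAction (H n) (Xn n)] {f : ∀ n, Xn n → Xn (n + 1)} {iota : ∀ n, H n →* G}
    {φ : ∀ n, Xn n → X} (hφc : ∀ n, Continuous (φ n))
    (hφcompat : ∀ n x, φ (n + 1) (f n x) = φ n x)
    (hφequiv : ∀ n (h : H n) x, φ n (h • x) = iota n h • φ n x)
    (hφdense : Dense (⋃ n, range (φ n))) {y : Xn 0}
    (hy : ∀ n, Dense (MulAction.orbit (H n) (f0Comp f n y))) (J : ℕ) :
    Dense ((· • φ 0 y) '' ⋃ (j) (_ : J ≤ j), range (iota j)) := by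
  have hrange : ∀ n, range (φ n) ⊆ closure ((· • φ 0 y) '' range (iota n)) := by
    intro n
    calc range (φ n) = φ n '' closure (MulAction.orbit (H n) (f0Comp f n y)) := by
          rw [(hy n).closure_eq, image_univ]
      _ ⊆ closure (φ n '' MulAction.orbit (H n) (f0Comp f n y)) :=
          image_closure_subset_closure_image (hφc n)
      _ = closure ((· • φ 0 y) '' range (iota n)) := by
          simp only [MulAction.orbit, ← range_comp, Function.comp_def, hφequiv,
            apply_f0Comp_of_compat f hφcompat]
  refine ((dense_iUnion_range_add_of_compat f hφcompat hφdense J).mono ?_).of_closure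
  refine iUnion_subset fun k => (hrange (J + k)).trans (closure_mono (image_mono ?_))
  exact subset_iUnion₂ (s := fun j _ => range (iota j)) (J + k) (Nat.le_add_right J k)

theorem ball_subset_closure_image_smul_of_comodSet {G X : Type*} [Group G] [MetricSpace G]
    [MetricSpace X] [MulAction G X] {H Xn : ℕ → Type*} [∀ n, Group (H n)]
    [∀ n, MetricSpace (H n)] [∀ n, MetricSpace (Xn n)] [∀ n, MulAction (H n) (Xn n)]
    {i : ∀ n, H n →* H (n + 1)} {f : ∀ n, Xn n → Xn (n + 1)} {iota : ∀ n, H n →* G}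
    {φ : ∀ n, Xn n → X} (hiotacompat : ∀ n h, iota (n + 1) (i n h) = iota n h)
    (hφc : ∀ n, Continuous (φ n)) (hφcompat : ∀ n x, φ (n + 1) (f n x) = φ n x)
    (hφequiv : ∀ n (h : H n) x, φ n (h • x) = iota n h • φ n x)
    (hφdense : Dense (⋃ n, range (φ n))) (y : Xn 0) {j : ℕ} (g : H j) {ε c : ℝ} {α : ℕ → ℝ}
    (hα : ∀ k, ball (chainComp (fun n => ⇑(i n)) j k g • f0Comp f (j + k) y) (α k) ⊆
      closure ((fun h : H (j + k) =>
          h • (chainComp (fun n => ⇑(i n)) j k g • f0Comp f (j + k) y)) ''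
        {h : H (j + k) | ∃ δ ∈ modSet (⇑(iota (j + k))) 1 ε, dist h 1 < δ}))
    (hc : ∀ k, ∃ δ ∈ comodSet (φ (j + k))
      (chainComp (fun n => ⇑(i n)) j k g • f0Comp f (j + k) y) (α k), c ≤ δ) :
    ball (iota j g • φ 0 y) c ⊆ closure ((· • φ 0 y) ''
      {γ | (∃ n, j ≤ n ∧ γ ∈ range (iota n)) ∧ ∃ u, dist u 1 < ε ∧ u * iota j g = γ}) := by
  set z := fun k => chainComp (fun n => ⇑(i n)) j k g • f0Comp f (j + k) y
  have hφz : ∀ k, φ (j + k) (z k) = iota j g • φ 0 y := fun k => by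
    rw [hφequiv, apply_f0Comp_of_compat f hφcompat,
      apply_chainComp_of_compat _ (φ := fun n => ⇑(iota n)) hiotacompat]
  refine ((dense_iUnion_range_add_of_compat f hφcompat hφdense j).open_subset_closure_inter
    isOpen_ball).trans ?_
  rw [inter_iUnion]
  refine closure_minimal (iUnion_subset fun k => ?_) isClosed_closure
  obtain ⟨δ, hδ, hcδ⟩ := hc k
  calc ball (iota j g • φ 0 y) c ∩ range (φ (j + k))
      ⊆ ball (φ (j + k) (z k)) δ ∩ range (φ (j + k)) := by
        rw [hφz]
        exact inter_subset_inter_left _ (ball_subset_ball hcδ)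
    _ ⊆ closure (φ (j + k) '' ((· • z k) ''
          {h | ∃ δ ∈ modSet (⇑(iota (j + k))) 1 ε, dist h 1 < δ})) :=
        ball_inter_range_subset_closure_image_of_mem_comodSet (hφc _) (hα k) hδ
    _ ⊆ _ := by
        refine closure_mono ?_
        rintro _ ⟨_, ⟨h, ⟨δ', hδ', hh⟩, rfl⟩, rfl⟩
        refine ⟨iota (j + k) h * iota j g, ⟨⟨j + k, Nat.le_add_right j k,
          h * chainComp (fun n => ⇑(i n)) j k g, ?_⟩, iota (j + k) h, ?_, rfl⟩, ?_⟩
        · rw [map_mul, apply_chainComp_of_compat _ (φ := fun n => ⇑(iota n)) hiotacompat]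
        · simpa using dist_apply_lt_of_mem_modSet hδ' hh
        · rw [hφequiv, hφz]
          exact mul_smul _ _ _

theorem orbit_comeager_of_direct_limit_approx_general
    {G X : Type*} [Group G] [MetricSpace G] [IsTopologicalGroup G] [PolishSpace G]
    [MetricSpace X] [MulAction G X] [ContinuousSMul G X]
    (H : ℕ → Type*) (Xn : ℕ → Type*)
    [∀ n, Group (H n)] [∀ n, MetricSpace (H n)]
    [∀ n, MetricSpace (Xn n)]
    [∀ n, MulAction (H n) (Xn n)]
    (i : ∀ n, H n →* H (n + 1))
    (f : ∀ n, Xn n → Xn (n + 1))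
    (iota : ∀ n, H n →* G)
    (hiotacompat : ∀ n (h : H n), iota (n + 1) (i n h) = iota n h)
    (φ : ∀ n, Xn n → X) (hφc : ∀ n, Continuous (φ n))
    (hφcompat : ∀ n (x : Xn n), φ (n + 1) (f n x) = φ n x)
    (hφequiv : ∀ n (h : H n) (x : Xn n), φ n (h • x) = iota n h • φ n x)
    (hφdense : Dense (⋃ n, Set.range (φ n)))
    (y : Xn 0) (hy : ∀ n, Dense (MulAction.orbit (H n) (f0Comp f n y)))
    (J : ℕ)
    (hmain : ∀ ε : ℝ, 0 < ε → ∀ j : ℕ, J ≤ j → ∀ g : H j, ∃ α : ℕ → ℝ,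
      (∀ k, 0 < α k) ∧
      (∀ k, Metric.ball (chainComp (fun n => ⇑(i n)) j k g • f0Comp f (j + k) y) (α k) ⊆
        closure ((fun h : H (j + k) =>
            h • (chainComp (fun n => ⇑(i n)) j k g • f0Comp f (j + k) y)) ''
          {h : H (j + k) | ∃ δ ∈ modSet (⇑(iota (j + k))) 1 ε, dist h 1 < δ})) ∧
      (∃ c : ℝ, 0 < c ∧ ∀ k, ∃ δ ∈ comodSet (φ (j + k))
          (chainComp (fun n => ⇑(i n)) j k g • f0Comp f (j + k) y) (α k), c ≤ δ)) :
    MulAction.orbit G (φ 0 y) ∈ residual X := by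
  refine orbit_mem_residual_of_closure_image_smul_mem_nhds
    (dense_image_smul_iUnion_range hφc hφcompat hφequiv hφdense hy J) ?_
  intro γ hγ V hV
  obtain ⟨j, hj, g, rfl⟩ : ∃ j, J ≤ j ∧ ∃ g, iota j g = γ := by simpa using hγ
  obtain ⟨ε, hε, hεV⟩ := exists_pos_forall_dist_one_lt_mul_mem hV
  obtain ⟨α, -, hα, c, hc, hcomod⟩ := hmain ε hε j hj g
  refine mem_of_superset (ball_mem_nhds _ hc) ((ball_subset_closure_image_smul_of_comodSet
    hiotacompat hφc hφcompat hφequiv hφdense y g hα hcomod).trans (closure_mono (image_mono ?_)))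
  rintro _ ⟨⟨n, hjn, hγ'⟩, u, hu, rfl⟩
  exact ⟨mem_iUnion₂.2 ⟨n, hj.trans hjn, hγ'⟩, hεV u hu⟩

/-- Suppose the Polish `G`-space `X` (with compatible metrics fixed on everything) is
approximated by the direct limit of the actions of Polish groups `Hₙ` on Polish spaces `Xₙ`,
via continuous homomorphisms `i n : Hₙ → Hₙ₊₁`, continuous injective equivariant maps
`f n : Xₙ → Xₙ₊₁`, continuous homomorphisms `iota n : Hₙ → G` with dense union of ranges, and
continuous equivariant maps `φ n : Xₙ → X` with dense union of ranges.  Let `y ∈ X₀` have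
dense `Hₙ`-orbit in every `Xₙ` and let `J ∈ ℕ`.  If for every `ε > 0`, every `j ≥ J` and
every `g ∈ H_j` there are positive reals `α_{j+k}` (`k ∈ ℕ`) such that
(1) for every `k`, the set of translates of `i_j^{j+k}(g) • f_0^{j+k}(y)` by elements `h` with
`dist(h,1) < mod(iota_{j+k}, 1, ε)` is dense in the ball of radius `α_{j+k}` around this point, and
(2) `inf_k comod(φ_{j+k}, i_j^{j+k}(g) • f_0^{j+k}(y), α_{j+k}) > 0`,
then the `G`-orbit of `φ₀(y)` is comeager in `X`. -/
theorem orbit_comeager_of_direct_limit_approx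
    {G X : Type*} [Group G] [MetricSpace G] [IsTopologicalGroup G] [PolishSpace G]
    [MetricSpace X] [PolishSpace X] [MulAction G X] [ContinuousSMul G X]
    (H : ℕ → Type*) (Xn : ℕ → Type*)
    [∀ n, Group (H n)] [∀ n, MetricSpace (H n)] [∀ n, IsTopologicalGroup (H n)]
    [∀ n, PolishSpace (H n)] [∀ n, MetricSpace (Xn n)] [∀ n, PolishSpace (Xn n)]
    [∀ n, MulAction (H n) (Xn n)] [∀ n, ContinuousSMul (H n) (Xn n)]
    (i : ∀ n, H n →* H (n + 1)) (hic : ∀ n, Continuous (i n))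
    (f : ∀ n, Xn n → Xn (n + 1)) (hfc : ∀ n, Continuous (f n))
    (hfinj : ∀ n, Function.Injective (f n))
    (hfequiv : ∀ n (h : H n) (x : Xn n), f n (h • x) = i n h • f n x)
    (iota : ∀ n, H n →* G) (hiotac : ∀ n, Continuous (iota n))
    (hiotacompat : ∀ n (h : H n), iota (n + 1) (i n h) = iota n h)
    (hiotadense : Dense (⋃ n, Set.range (iota n)))
    (φ : ∀ n, Xn n → X) (hφc : ∀ n, Continuous (φ n))
    (hφcompat : ∀ n (x : Xn n), φ (n + 1) (f n x) = φ n x)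
    (hφequiv : ∀ n (h : H n) (x : Xn n), φ n (h • x) = iota n h • φ n x)
    (hφdense : Dense (⋃ n, Set.range (φ n)))
    (y : Xn 0) (hy : ∀ n, Dense (MulAction.orbit (H n) (f0Comp f n y)))
    (J : ℕ)
    (hmain : ∀ ε : ℝ, 0 < ε → ∀ j : ℕ, J ≤ j → ∀ g : H j, ∃ α : ℕ → ℝ,
      (∀ k, 0 < α k) ∧
      (∀ k, Metric.ball (chainComp (fun n => ⇑(i n)) j k g • f0Comp f (j + k) y) (α k) ⊆
        closure ((fun h : H (j + k) =>
            h • (chainComp (fun n => ⇑(i n)) j k g • f0Comp f (j + k) y)) ''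
          {h : H (j + k) | ∃ δ ∈ modSet (⇑(iota (j + k))) 1 ε, dist h 1 < δ})) ∧
      (∃ c : ℝ, 0 < c ∧ ∀ k, ∃ δ ∈ comodSet (φ (j + k))
          (chainComp (fun n => ⇑(i n)) j k g • f0Comp f (j + k) y) (α k), c ≤ δ)) :
    MulAction.orbit G (φ 0 y) ∈ residual X :=
  orbit_comeager_of_direct_limit_approx_general H Xn i f iota hiotacompat φ hφc hφcompat hφequiv
    hφdense y hy J hmain

end
end

section
/- For every g ∈ Homeo_+[0,1] and every integer d ≥ 1, one has g ∘ T_d = T_d ∘ ⊕^d(g), i.e. g(T_d(x)) = T_d(⊕^d(g)(x)) for all x ∈ [0,1]. -/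
/-! On the piece `[m/d, (m+1)/d]` the tent map is `x ↦ d x - m` for even `m` and its reflection
`σ (d x - m)` for odd `m`, while `⊕^d(g)` maps the piece onto itself by `g_m` rescaled. Hence
`T_d ∘ ⊕^d(g)` is `g ∘ T_d` on even pieces and `σ ∘ g̃ ∘ σ ∘ T_d = g ∘ T_d` on odd ones. -/

open unitInterval

noncomputable section

/-- The group of orientation-preserving homeomorphisms of `[0,1]`:
increasing homeomorphisms of the unit interval. -/
def OPH : Type := {f : I ≃ₜ I // Monotone f}

/-- `Homeo₊[0,1]` with the supremum metric `d_sup(f,g) = sup_x |f x - g x|`,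
obtained by inducing the metric from `C(I,I)` (whose distance is the sup-distance). -/
noncomputable instance : MetricSpace OPH :=
  MetricSpace.induced (fun f => (⟨(f.1 : I → I), f.1.continuous⟩ : C(I, I)))
    (fun f g h => Subtype.ext (Homeomorph.ext fun x => by
      simpa using ContinuousMap.congr_fun h x))
    inferInstance

/-- The identity of `Homeo₊[0,1]`. -/
def OPH.id : OPH := ⟨Homeomorph.refl I, fun _ _ h => h⟩

/-- `f ↦ f̃` where `f̃ (x) = 1 - f (1 - x)`. -/
def OPH.tilde (f : OPH) : OPH :=
  ⟨symmHomeomorph.trans (f.1.trans symmHomeomorph), by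
    intro x y hxy
    have h1 : σ y ≤ σ x := symm_le_symm.mpr hxy
    have h2 : f.1 (σ y) ≤ f.1 (σ x) := f.2 h1
    exact symm_le_symm.mpr h2⟩



/-- The standard degree-`d` tent map, as a function on `ℝ`.  For
`x ∈ [m/d, (m+1)/d]` it equals `d*x - m` if `m` is even and `1 + m - d*x` if `m` is odd. -/
noncomputable def tentFun (d : ℕ) (x : ℝ) : ℝ :=
  if Even ⌊(d : ℝ) * x⌋ then (d : ℝ) * x - ⌊(d : ℝ) * x⌋ else 1 + ⌊(d : ℝ) * x⌋ - (d : ℝ) * x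

/-- The standard degree-`d` tent map `T_d : [0,1] → [0,1]`. -/
noncomputable def tentI (d : ℕ) (x : I) : I :=
  ⟨tentFun d x, by
    have h0 : ((⌊(d : ℝ) * x⌋ : ℤ) : ℝ) ≤ (d : ℝ) * x := Int.floor_le _
    have h1 : ((d : ℝ) * x : ℝ) < ⌊(d : ℝ) * x⌋ + 1 := Int.lt_floor_add_one _
    unfold tentFun
    rw [Set.mem_Icc]
    split_ifs <;> constructor <;> linarith⟩

/-- The defining property of the homeomorphism `⊕^d(g)` of `[0,1]`:
`G = ⊕^d(g)` iff for every `i < d` and `x ∈ [i/d, (i+1)/d]`,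
`G x = (1/d) * g_i (d*x - i) + i/d`, where `g_i = g` for even `i` and `g_i = g̃`
(with `g̃ (x) = 1 - g (1-x)`) for odd `i`. -/
def OplusProp (g : OPH) (d : ℕ) (G : I → I) : Prop :=
  ∀ i : ℕ, i < d → ∀ x : I, (i : ℝ) / d ≤ (x : ℝ) → (x : ℝ) ≤ ((i : ℝ) + 1) / d →
    ∀ hx : (d : ℝ) * (x : ℝ) - (i : ℝ) ∈ unitInterval,
      (G x : ℝ) =
        (1 / d) * ((if Even i then g.1 else (OPH.tilde g).1) ⟨(d : ℝ) * (x : ℝ) - (i : ℝ), hx⟩ : ℝ)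
          + (i : ℝ) / d

lemma tentFun_of_mul_eq_add {d : ℕ} {y : ℝ} (i : ℤ) {u : ℝ} (hu : u ∈ I)
    (hy : (d : ℝ) * y = i + u) :
    tentFun d y = if Even i then u else 1 - u := by
  unfold tentFun
  rw [hy]
  rcases hu.2.eq_or_lt with rfl | hu1
  · -- at the right endpoint of the piece the floor jumps to `i + 1`, flipping the parity
    have hfloor : ⌊(i : ℝ) + 1⌋ = i + 1 := by exact_mod_cast Int.floor_intCast (i + 1)
    rw [hfloor]
    simp only [Int.even_add_one]
    split_ifs <;> push_cast <;> ring
  · have hfloor : ⌊(i : ℝ) + u⌋ = i := by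
      rw [Int.floor_eq_iff]
      constructor <;> linarith [hu.1]
    rw [hfloor]
    split_ifs <;> ring

lemma tentI_eq_of_mul_eq_add {d : ℕ} {x : I} (m : ℕ) (u : I) (h : (d : ℝ) * x = m + u) :
    tentI d x = if Even m then u else σ u := by
  have h' : (d : ℝ) * x = ((m : ℤ) : ℝ) + u := by rwa [Int.cast_natCast]
  apply Subtype.ext
  rw [apply_ite Subtype.val, coe_symm_eq]
  change tentFun d x = _
  simpa only [Int.even_coe_nat] using tentFun_of_mul_eq_add (d := d) (m : ℤ) u.2 h'

lemma exists_nat_lt_le_le_add_one {n : ℕ} (hn : 1 ≤ n) {t : ℝ} (ht0 : 0 ≤ t) (htn : t ≤ n) :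
    ∃ m : ℕ, m < n ∧ (m : ℝ) ≤ t ∧ t ≤ m + 1 := by
  rcases htn.lt_or_eq with htn | rfl
  · exact ⟨⌊t⌋₊, Nat.floor_lt ht0 |>.2 htn, Nat.floor_le ht0, (Nat.lt_floor_add_one t).le⟩
  · refine ⟨n - 1, by omega, ?_, ?_⟩ <;> rw [Nat.cast_sub hn] <;> simp

lemma OPH.symm_tilde_apply (g : OPH) (x : I) : σ ((OPH.tilde g).1 x) = g.1 (σ x) :=
  symm_symm _

/-- For every `g ∈ Homeo₊[0,1]` and every `d ≥ 1`: `g ∘ T_d = T_d ∘ ⊕^d(g)`,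
where `G = ⊕^d(g)` is (any, equivalently the unique) map satisfying the defining
piecewise formula `OplusProp g d G`. -/
theorem comp_tent_eq_tent_comp_oplus (g : OPH) (d : ℕ) (hd : 1 ≤ d) (G : I → I)
    (hG : OplusProp g d G) :
    ∀ x : I, g.1 (tentI d x) = tentI d (G x) := by
  intro x
  have hd0 : (0 : ℝ) < d := by exact_mod_cast hd
  obtain ⟨m, hmd, hm_le, hle_succ⟩ := exists_nat_lt_le_le_add_one hd
    (mul_nonneg hd0.le x.2.1) (mul_le_of_le_one_right hd0.le x.2.2)
  let u : I := ⟨d * x - m, by constructor <;> linarith⟩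
  let gm : OPH := if Even m then g else OPH.tilde g
  have hGx : (G x : ℝ) = 1 / d * (gm.1 u : ℝ) + m / d := by
    rw [hG m hmd x (by rw [div_le_iff₀ hd0]; linarith) (by rw [le_div_iff₀ hd0]; linarith) u.2]
    simp only [gm, apply_ite (fun f : OPH => f.1), u]
  have htent_x : tentI d x = if Even m then u else σ u :=
    tentI_eq_of_mul_eq_add m u (by simp only [u]; ring)
  have htent_Gx : tentI d (G x) = if Even m then gm.1 u else σ (gm.1 u) :=
    tentI_eq_of_mul_eq_add m (gm.1 u) (by rw [hGx]; field_simp; ring)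
  rw [htent_x, htent_Gx]
  by_cases hm : Even m
  · simp only [hm, if_true, gm]
  · simp only [hm, if_false, gm, OPH.symm_tilde_apply]

end
end

section
/- Let f, g : [0,1] → [0,1] be continuous open maps with f(0) = g(0) = 0, and suppose f and g have the same finite degree n (i.e., n is minimal such that [0,1] can be partitioned by points 0 = i_0 < i_1 < ⋯ < i_n = 1 into n subintervals on each of which the map is monotone, for both f and g). Then there exists an orientation-preserving homeomorphism h of [0,1] such that f = g ∘ h. -/
open unitInterval

noncomputable section

/-- `f` admits a partition `0 = u 0 < u 1 < ⋯ < u k = 1` of `[0,1]` into `k` subintervals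
on each of which `f` is monotone (nondecreasing or nonincreasing).  The degree of a
continuous open map `f : [0,1] → [0,1]` is the least such `k`. -/
def DegWitness (f : I → I) (k : ℕ) : Prop :=
  ∃ u : Fin (k + 1) → I, StrictMono u ∧ u 0 = 0 ∧ u (Fin.last k) = 1 ∧
    ∀ j : Fin k, MonotoneOn f (Set.Icc (u j.castSucc) (u j.succ)) ∨
      AntitoneOn f (Set.Icc (u j.castSucc) (u j.succ))

/-!
Take a partition witnessing the degree `n` of `f`. Since `f` is open, it is strictly monotone on
every piece, and every partition point other than `0` is a local extremum (two consecutive pieces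
with the same direction could be merged, contradicting minimality), where `f` takes the value `0`
or `1`. Starting from `f 0 = 0`, the values at the partition points therefore alternate. Hence the
total variation `L x` of `f` on `[0, x]` is a strictly increasing continuous map of `[0, 1]` onto
`[0, n]`, and `L x ∓ f x` is an even integer, i.e. `cos (π L x) = cos (π f x)`. Doing the same
for `g`, the homeomorphism `h = L_g⁻¹ ∘ L_f` satisfies `cos (π g (h x)) = cos (π f x)`, hence
`g ∘ h = f` because `cos` is injective on `[0, π]`.
-/

open Set Filter Topology Real

section OpenMap

variable {α β : Type*} [TopologicalSpace α] [TopologicalSpace β] {f : α → β}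

theorem IsOpenMap.not_eqOn_const_Ioo [LinearOrder α] [OrderTopology α] [DenselyOrdered α]
    [∀ b : β, (𝓝[≠] b).NeBot] (hf : IsOpenMap f) {x y : α} (hxy : x < y) (c : β) :
    ¬EqOn f (fun _ => c) (Ioo x y) := by
  intro h
  apply not_isOpen_singleton c
  rw [← (nonempty_Ioo.2 hxy).image_const c, ← h.image_eq]
  exact hf _ isOpen_Ioo

section Monotone

variable [LinearOrder α] [OrderTopology α] [DenselyOrdered α] [PartialOrder β]
  [∀ b : β, (𝓝[≠] b).NeBot] {s : Set α}

theorem IsOpenMap.strictMonoOn_of_monotoneOn (hf : IsOpenMap f) (hs : s.OrdConnected)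
    (hmono : MonotoneOn f s) : StrictMonoOn f s := by
  intro x hx y hy hxy
  refine (hmono hx hy hxy.le).lt_of_ne fun hfxy => hf.not_eqOn_const_Ioo hxy (f x) fun z hz => ?_
  have hzs : z ∈ s := hs.out hx hy (Ioo_subset_Icc_self hz)
  exact le_antisymm (hfxy ▸ hmono hzs hy hz.2.le) (hmono hx hzs hz.1.le)

theorem IsOpenMap.strictAntiOn_of_antitoneOn (hf : IsOpenMap f) (hs : s.OrdConnected)
    (hanti : AntitoneOn f s) : StrictAntiOn f s := by
  intro x hx y hy hxy
  refine (hanti hx hy hxy.le).lt_of_ne' fun hfxy => hf.not_eqOn_const_Ioo hxy (f x) fun z hz => ?_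
  have hzs : z ∈ s := hs.out hx hy (Ioo_subset_Icc_self hz)
  exact le_antisymm (hanti hx hzs hz.1.le) (hfxy ▸ hanti hzs hy hz.2.le)

end Monotone

theorem IsLocalMax.isMax_of_isOpenMap [LinearOrder β] [OrderTopology β] [DenselyOrdered β]
    (hf : IsOpenMap f) {x : α} (h : IsLocalMax f x) : IsMax (f x) := by
  intro b hb
  by_contra hlt
  have := nhdsGT_neBot_of_exists_gt ⟨b, lt_of_not_ge hlt⟩
  obtain ⟨_, ⟨z, hz, rfl⟩, hzx⟩ := Filter.nonempty_of_mem (f := 𝓝[>] f x) <|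
    inter_mem (mem_nhdsWithin_of_mem_nhds (hf.image_mem_nhds h)) self_mem_nhdsWithin
  exact not_le.2 hzx hz

theorem IsLocalMin.isMin_of_isOpenMap [LinearOrder β] [OrderTopology β] [DenselyOrdered β]
    (hf : IsOpenMap f) {x : α} (h : IsLocalMin f x) : IsMin (f x) :=
  IsLocalMax.isMax_of_isOpenMap (β := βᵒᵈ) hf h

theorem IsLocalExtr.eq_zero_or_eq_one_of_isOpenMap {f : α → I} (hf : IsOpenMap f) {x : α}
    (h : IsLocalExtr f x) : f x = 0 ∨ f x = 1 :=
  h.imp (fun h => (IsLocalMin.isMin_of_isOpenMap hf h).eq_bot)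
    fun h => (IsLocalMax.isMax_of_isOpenMap hf h).eq_top

end OpenMap

section LocalExtr

variable {α β : Type*} [TopologicalSpace α] [LinearOrder α] [OrderTopology α] [Preorder β]
  {f : α → β} {a b c : α}

theorem MonotoneOn.isLocalMax_of_antitoneOn (hf : MonotoneOn f (Icc a b))
    (hf' : AntitoneOn f (Icc b c)) (hab : a < b) (hbc : b < c) : IsLocalMax f b := by
  refine IsMaxOn.isLocalMax (s := Icc a c) (fun x hx => ?_) (Icc_mem_nhds hab hbc)
  rcases le_total x b with hxb | hbx
  · exact hf ⟨hx.1, hxb⟩ ⟨hab.le, le_rfl⟩ hxb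
  · exact hf' ⟨le_rfl, hbc.le⟩ ⟨hbx, hx.2⟩ hbx

theorem AntitoneOn.isLocalMin_of_monotoneOn (hf : AntitoneOn f (Icc a b))
    (hf' : MonotoneOn f (Icc b c)) (hab : a < b) (hbc : b < c) : IsLocalMin f b :=
  MonotoneOn.isLocalMax_of_antitoneOn (β := βᵒᵈ) hf hf' hab hbc

theorem isLocalExtr_top_of_monotoneOn_or_antitoneOn [OrderTop α]
    (hf : MonotoneOn f (Icc a ⊤) ∨ AntitoneOn f (Icc a ⊤)) (ha : a < ⊤) :
    IsLocalExtr f ⊤ := by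
  have hnhds : Icc a ⊤ ∈ 𝓝 (⊤ : α) := by simpa only [Icc_top] using Ici_mem_nhds ha
  have htop : (⊤ : α) ∈ Icc a ⊤ := ⟨ha.le, le_rfl⟩
  rcases hf with hf | hf
  · exact Or.inr <| IsMaxOn.isLocalMax (fun x hx => hf hx htop hx.2) hnhds
  · exact Or.inl <| IsMinOn.isLocalMin (fun x hx => hf hx htop hx.2) hnhds

end LocalExtr

theorem exists_castSucc_lt_and_le_succ {α : Type*} [LinearOrder α] :
    ∀ {n : ℕ} (u : Fin (n + 1) → α) {y : α}, u 0 < y → y ≤ u (Fin.last n) →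
      ∃ j : Fin n, u j.castSucc < y ∧ y ≤ u j.succ
  | 0, _, _, h0, h1 => absurd (h0.trans_le h1) (lt_irrefl _)
  | n + 1, u, y, h0, h1 => by
    by_cases hy : y ≤ u (Fin.last n).castSucc
    · obtain ⟨j, hj⟩ := exists_castSucc_lt_and_le_succ (u ∘ Fin.castSucc) h0 hy
      exact ⟨j.castSucc, hj⟩
    · exact ⟨Fin.last n, lt_of_not_ge hy, h1⟩

theorem strictMonoOn_abs_sub_apply_left {α : Type*} [LinearOrder α] {F : α → ℝ} {a b : α}
    (hF : StrictMonoOn F (Icc a b) ∨ StrictAntiOn F (Icc a b)) :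
    StrictMonoOn (fun x => |F x - F a|) (Icc a b) := by
  intro x hx y hy hxy
  have ha : a ∈ Icc a b := ⟨le_rfl, hx.1.trans hx.2⟩
  rcases hF with hF | hF
  · have hax := hF.monotoneOn ha hx hx.1
    have hxy' := hF hx hy hxy
    simp only [abs_of_nonneg (sub_nonneg.2 hax), abs_of_nonneg (sub_nonneg.2 (hax.trans hxy'.le))]
    linarith
  · have hax := hF.antitoneOn ha hx hx.1
    have hxy' := hF hx hy hxy
    simp only [abs_of_nonpos (sub_nonpos.2 hax), abs_of_nonpos (sub_nonpos.2 (hxy'.le.trans hax))]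
    linarith

theorem abs_apply_succ_sub_apply_castSucc {β : Type*} {n : ℕ} {F : β → ℝ}
    {u : Fin (n + 1) → β}
    (hval : ∀ k : Fin (n + 1), F (u k) = if Even (k : ℕ) then 0 else 1) (j : Fin n) :
    |F (u j.succ) - F (u j.castSucc)| = 1 := by
  rw [hval, hval, Fin.val_succ, Fin.val_castSucc]
  by_cases he : Even (j : ℕ) <;> simp [he, Nat.even_add_one]

section PiecewiseVariation

variable {α : Type*} [LinearOrder α] {n : ℕ} (F : α → ℝ) (u : Fin (n + 1) → α)

/-- For `F` monotone or antitone on each piece `[u j, u (j + 1)]`, this is the total variation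
of `F` on `[u 0, x]`. -/
def piecewiseVariation (x : α) : ℝ :=
  ∑ j : Fin n, |F (max (u j.castSucc) (min x (u j.succ))) - F (u j.castSucc)|

variable {F u}

theorem piecewiseVariation_strictMonoOn (hu : StrictMono u)
    (hF : ∀ j : Fin n, StrictMonoOn F (Icc (u j.castSucc) (u j.succ)) ∨
      StrictAntiOn F (Icc (u j.castSucc) (u j.succ))) :
    StrictMonoOn (piecewiseVariation F u) (Icc (u 0) (u (Fin.last n))) := by
  intro x hx y hy hxy
  have hmem : ∀ (j : Fin n) z,
      max (u j.castSucc) (min z (u j.succ)) ∈ Icc (u j.castSucc) (u j.succ) := fun j z =>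
    ⟨le_max_left _ _, max_le (hu.monotone (Fin.castSucc_le_succ j)) (min_le_right _ _)⟩
  have hclamp : ∀ (j : Fin n) {z w : α}, z ≤ w →
      max (u j.castSucc) (min z (u j.succ)) ≤ max (u j.castSucc) (min w (u j.succ)) :=
    fun j z w hzw => max_le_max le_rfl (min_le_min_right _ hzw)
  obtain ⟨j, hjy, hyj⟩ := exists_castSucc_lt_and_le_succ u (hx.1.trans_lt hxy) hy.2
  refine Finset.sum_lt_sum (fun i _ => (strictMonoOn_abs_sub_apply_left (hF i)).monotoneOn
    (hmem i x) (hmem i y) (hclamp i hxy.le)) ⟨j, Finset.mem_univ _, ?_⟩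
  refine strictMonoOn_abs_sub_apply_left (hF j) (hmem j x) (hmem j y) ?_
  rw [min_eq_left hyj, max_eq_right hjy.le, min_eq_left (hxy.le.trans hyj)]
  exact max_lt hjy hxy

theorem continuous_piecewiseVariation [TopologicalSpace α] [OrderClosedTopology α]
    (hF : Continuous F) : Continuous (piecewiseVariation F u) := by
  unfold piecewiseVariation
  fun_prop

theorem piecewiseVariation_apply_zero (hu : Monotone u) : piecewiseVariation F u (u 0) = 0 := by
  refine Finset.sum_eq_zero fun j _ => ?_
  rw [min_eq_left (hu (Fin.zero_le _)), max_eq_left (hu (Fin.zero_le _)), sub_self, abs_zero]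

theorem piecewiseVariation_apply_last (hu : Monotone u)
    (hval : ∀ k : Fin (n + 1), F (u k) = if Even (k : ℕ) then 0 else 1) :
    piecewiseVariation F u (u (Fin.last n)) = n := by
  have hterm : ∀ j : Fin n, |F (max (u j.castSucc) (min (u (Fin.last n)) (u j.succ))) -
      F (u j.castSucc)| = 1 := fun j => by
    rw [min_eq_right (hu (Fin.le_last _)), max_eq_right (hu (Fin.castSucc_le_succ _))]
    exact abs_apply_succ_sub_apply_castSucc hval j
  simp [piecewiseVariation, hterm]

theorem piecewiseVariation_of_mem_Icc (hu : Monotone u)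
    (hval : ∀ k : Fin (n + 1), F (u k) = if Even (k : ℕ) then 0 else 1) {j : Fin n} {x : α}
    (hx : x ∈ Icc (u j.castSucc) (u j.succ)) :
    piecewiseVariation F u x = j + |F x - F (u j.castSucc)| := by
  have hterm : ∀ i : Fin n, |F (max (u i.castSucc) (min x (u i.succ))) - F (u i.castSucc)| =
      (if i < j then 1 else 0) + if i = j then |F x - F (u j.castSucc)| else 0 := by
    intro i
    rcases lt_trichotomy i j with hij | rfl | hij
    · have hix : u i.succ ≤ x := (hu (Fin.succ_le_castSucc_iff.2 hij)).trans hx.1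
      rw [min_eq_right hix, max_eq_right (hu (Fin.castSucc_le_succ _)),
        abs_apply_succ_sub_apply_castSucc hval, if_pos hij, if_neg hij.ne, add_zero]
    · rw [min_eq_left hx.2, max_eq_right hx.1, if_neg (lt_irrefl _), if_pos rfl, zero_add]
    · have hxi : x ≤ u i.castSucc := hx.2.trans (hu (Fin.succ_le_castSucc_iff.2 hij))
      rw [min_eq_left (hxi.trans (hu (Fin.castSucc_le_succ _))), max_eq_left hxi, sub_self,
        abs_zero, if_neg (lt_asymm hij), if_neg hij.ne', add_zero]
  rw [piecewiseVariation, Finset.sum_congr rfl fun i _ => hterm i, Finset.sum_add_distrib,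
    Finset.sum_ite_eq', if_pos (Finset.mem_univ _), Finset.sum_boole, Finset.filter_gt_eq_Iio,
    Fin.card_Iio]

theorem cos_pi_mul_piecewiseVariation (hu : Monotone u)
    (hval : ∀ k : Fin (n + 1), F (u k) = if Even (k : ℕ) then 0 else 1)
    (hFI : ∀ x, F x ∈ Icc 0 1) {x : α} (hx : x ∈ Icc (u 0) (u (Fin.last n))) :
    cos (π * piecewiseVariation F u x) = cos (π * F x) := by
  rcases hx.1.eq_or_lt with h | h
  · rw [← h, piecewiseVariation_apply_zero hu, hval 0]
    simp
  obtain ⟨j, hjx, hxj⟩ := exists_castSucc_lt_and_le_succ u h hx.2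
  rw [piecewiseVariation_of_mem_Icc hu hval ⟨hjx.le, hxj⟩, hval, Fin.val_castSucc]
  split_ifs with he
  · obtain ⟨m, hm⟩ := he
    rw [sub_zero, abs_of_nonneg (hFI x).1, ← cos_add_nat_mul_two_pi (π * F x) m, hm]
    push_cast
    ring_nf
  · obtain ⟨m, hm⟩ := Nat.not_even_iff_odd.1 he
    rw [abs_of_nonpos (sub_nonpos.2 (hFI x).2), ← cos_nat_mul_two_pi_sub (π * F x) (m + 1),
      hm]
    push_cast
    ring_nf

end PiecewiseVariation

theorem Monotone.range_eq_Icc_of_continuous {α β : Type*} [TopologicalSpace α]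
    [PreconnectedSpace α] [Preorder α] [BoundedOrder α] [LinearOrder β] [TopologicalSpace β]
    [OrderClosedTopology β] {φ : α → β} (hm : Monotone φ) (hc : Continuous φ) :
    range φ = Icc (φ ⊥) (φ ⊤) :=
  (range_subset_iff.2 fun _ => mem_Icc.2 ⟨hm bot_le, hm le_top⟩).antisymm
    (intermediate_value_univ ⊥ ⊤ hc)

theorem StrictMono.exists_orderIso_comp_eq {α β : Type*} [LinearOrder α] [Preorder β]
    {φ ψ : α → β} (hφ : StrictMono φ) (hψ : StrictMono ψ) (h : range φ = range ψ) :
    ∃ e : α ≃o α, ∀ x, ψ (e x) = φ x :=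
  ⟨(hφ.orderIso φ).trans ((OrderIso.setCongr _ _ h).trans (hψ.orderIso ψ).symm),
    fun _ => congrArg Subtype.val ((hψ.orderIso ψ).apply_symm_apply _)⟩

section Degree

variable {f : I → I}

theorem DegWitness.of_merge {m : ℕ} {u : Fin (m + 2) → I} (hu : StrictMono u) (h0 : u 0 = 0)
    (h1 : u (Fin.last (m + 1)) = 1)
    (hpiece : ∀ i : Fin (m + 1), MonotoneOn f (Icc (u i.castSucc) (u i.succ)) ∨
      AntitoneOn f (Icc (u i.castSucc) (u i.succ)))
    (j : Fin m) (hj : MonotoneOn f (Icc (u j.castSucc.castSucc) (u j.succ.succ)) ∨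
      AntitoneOn f (Icc (u j.castSucc.castSucc) (u j.succ.succ))) :
    DegWitness f m := by
  have hp0 : j.succ.castSucc ≠ 0 := Fin.castSucc_ne_zero_iff.2 j.succ_ne_zero
  refine ⟨u ∘ j.succ.castSucc.succAbove, hu.comp (Fin.strictMono_succAbove _), ?_, ?_,
    fun i => ?_⟩
  · rw [Function.comp_apply, Fin.succAbove_ne_zero_zero hp0, h0]
  · rw [Function.comp_apply, Fin.succAbove_ne_last_last (Fin.castSucc_lt_last _).ne, h1]
  simp only [Function.comp_apply]
  rcases lt_trichotomy i j with hij | rfl | hij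
  · rw [Fin.succAbove_of_castSucc_lt _ _ (by simpa using hij.le),
      Fin.succAbove_of_castSucc_lt _ _ (by simpa using hij), ← Fin.succ_castSucc]
    exact hpiece i.castSucc
  · rw [Fin.succAbove_of_castSucc_lt _ _ (by simp), Fin.succAbove_of_le_castSucc _ _ le_rfl]
    exact hj
  · rw [Fin.succAbove_of_le_castSucc _ _ (by simpa using hij),
      Fin.succAbove_of_le_castSucc _ _ (by simpa using hij.le), Fin.succ_castSucc]
    exact hpiece i.succ

theorem isLocalExtr_of_isLeast_degWitness {n : ℕ} (hn : IsLeast {k | DegWitness f k} n)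
    {u : Fin (n + 1) → I} (hu : StrictMono u) (h0 : u 0 = 0) (h1 : u (Fin.last n) = 1)
    (hpiece : ∀ i : Fin n, MonotoneOn f (Icc (u i.castSucc) (u i.succ)) ∨
      AntitoneOn f (Icc (u i.castSucc) (u i.succ)))
    (k : Fin (n + 1)) (hk : k ≠ 0) : IsLocalExtr f (u k) := by
  obtain ⟨m, rfl⟩ : ∃ m, n = m + 1 :=
    Nat.exists_eq_succ_of_ne_zero (by rintro rfl; exact hk (Fin.fin_one_eq_zero k))
  induction k using Fin.lastCases with
  | last =>
    have hlast := hpiece (Fin.last m)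
    rw [Fin.succ_last, h1] at hlast
    rw [h1]
    exact isLocalExtr_top_of_monotoneOn_or_antitoneOn hlast
      ((hu (Fin.castSucc_lt_last _)).trans_eq h1)
  | cast i =>
    induction i using Fin.cases with
    | zero => exact absurd rfl hk
    | succ j =>
      have hlt : u j.castSucc.castSucc < u j.succ.castSucc := hu (by simp)
      have hlt' : u j.succ.castSucc < u j.succ.succ := hu Fin.castSucc_lt_succ
      have hunion : Icc (u j.castSucc.castSucc) (u j.succ.castSucc) ∪
          Icc (u j.succ.castSucc) (u j.succ.succ) = Icc (u j.castSucc.castSucc) (u j.succ.succ) :=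
        Icc_union_Icc_eq_Icc hlt.le hlt'.le
      have hmerge := fun h => (hn.2 (DegWitness.of_merge hu h0 h1 hpiece j h) : m + 1 ≤ m)
      rcases hpiece j.castSucc with h | h <;> rcases hpiece j.succ with h' | h' <;>
        rw [Fin.succ_castSucc] at h
      · exact absurd (hmerge (Or.inl (hunion ▸ h.union_right h' (isGreatest_Icc hlt.le)
          (isLeast_Icc hlt'.le)))) (by omega)
      · exact Or.inr (h.isLocalMax_of_antitoneOn h' hlt hlt')
      · exact Or.inl (h.isLocalMin_of_monotoneOn h' hlt hlt')
      · exact absurd (hmerge (Or.inr (hunion ▸ h.union_right h' (isGreatest_Icc hlt.le)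
          (isLeast_Icc hlt'.le)))) (by omega)

theorem exists_zigzag_partition (hfo : IsOpenMap f) (hf0 : f 0 = 0) {n : ℕ}
    (hn : IsLeast {k | DegWitness f k} n) :
    ∃ u : Fin (n + 1) → I, StrictMono u ∧ u 0 = 0 ∧ u (Fin.last n) = 1 ∧
      (∀ j : Fin n, StrictMonoOn f (Icc (u j.castSucc) (u j.succ)) ∨
        StrictAntiOn f (Icc (u j.castSucc) (u j.succ))) ∧
      ∀ k : Fin (n + 1), (f (u k) : ℝ) = if Even (k : ℕ) then 0 else 1 := by
  obtain ⟨u, hu, h0, h1, hpiece⟩ := hn.1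
  have hstrict : ∀ j : Fin n, StrictMonoOn f (Icc (u j.castSucc) (u j.succ)) ∨
      StrictAntiOn f (Icc (u j.castSucc) (u j.succ)) := fun j =>
    (hpiece j).imp (hfo.strictMonoOn_of_monotoneOn ordConnected_Icc)
      (hfo.strictAntiOn_of_antitoneOn ordConnected_Icc)
  refine ⟨u, hu, h0, h1, hstrict, Fin.induction (by simp [h0, hf0]) fun i ih => ?_⟩
  have hlt : u i.castSucc < u i.succ := hu Fin.castSucc_lt_succ
  have hne : f (u i.succ) ≠ f (u i.castSucc) := by
    rcases hstrict i with h | h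
    · exact (h ⟨le_rfl, hlt.le⟩ ⟨hlt.le, le_rfl⟩ hlt).ne'
    · exact (h ⟨le_rfl, hlt.le⟩ ⟨hlt.le, le_rfl⟩ hlt).ne
  have h01 := (isLocalExtr_of_isLeast_degWitness hn hu h0 h1 hpiece i.succ
    i.succ_ne_zero).eq_zero_or_eq_one_of_isOpenMap hfo
  rw [Fin.val_castSucc] at ih
  simp only [Fin.val_succ, Nat.even_add_one]
  by_cases he : Even (i : ℕ) <;> simp only [he, if_true, if_false] at ih ⊢ <;>
    rcases h01 with h | h <;> simp_all

theorem exists_strictMono_lift (hfc : Continuous f) (hfo : IsOpenMap f)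
    (hf0 : f 0 = 0) {n : ℕ} (hn : IsLeast {k | DegWitness f k} n) :
    ∃ L : I → ℝ, StrictMono L ∧ Continuous L ∧ L 0 = 0 ∧ L 1 = n ∧
      ∀ x, cos (π * L x) = cos (π * f x) := by
  obtain ⟨u, hu, h0, h1, hpiece, hval⟩ := exists_zigzag_partition hfo hf0 hn
  have hF : ∀ j : Fin n, StrictMonoOn (fun x => (f x : ℝ)) (Icc (u j.castSucc) (u j.succ)) ∨
      StrictAntiOn (fun x => (f x : ℝ)) (Icc (u j.castSucc) (u j.succ)) := fun j =>
    (hpiece j).imp (Subtype.strictMono_coe _).comp_strictMonoOn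
      (Subtype.strictMono_coe _).comp_strictAntiOn
  have huniv : ∀ x : I, x ∈ Icc (u 0) (u (Fin.last n)) := fun x => by
    rw [h0, h1]
    exact ⟨nonneg', le_one'⟩
  refine ⟨piecewiseVariation (fun x => (f x : ℝ)) u,
    fun x y hxy => piecewiseVariation_strictMonoOn hu hF (huniv x) (huniv y) hxy,
    continuous_piecewiseVariation (continuous_subtype_val.comp hfc), ?_, ?_,
    fun x => cos_pi_mul_piecewiseVariation hu.monotone hval (fun x => (f x).2) (huniv x)⟩
  · rw [← h0]
    exact piecewiseVariation_apply_zero hu.monotone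
  · rw [← h1]
    exact piecewiseVariation_apply_last hu.monotone hval

end Degree

/-- If `f, g : [0,1] → [0,1]` are continuous open maps with `f 0 = g 0 = 0` of the same
finite degree `n`, then there is an orientation-preserving homeomorphism `h` of `[0,1]`
with `f = g ∘ h`. -/
theorem exists_oph_comp_of_same_degree (f g : I → I)
    (hfc : Continuous f) (hgc : Continuous g) (hfo : IsOpenMap f) (hgo : IsOpenMap g)
    (hf0 : f 0 = 0) (hg0 : g 0 = 0) (n : ℕ)
    (hfn : IsLeast {k : ℕ | DegWitness f k} n) (hgn : IsLeast {k : ℕ | DegWitness g k} n) :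
    ∃ h : I ≃ₜ I, Monotone h ∧ ∀ x : I, f x = g (h x) := by
  obtain ⟨Lf, hLf, hLfc, hLf0, hLf1, hLf_cos⟩ := exists_strictMono_lift hfc hfo hf0 hfn
  obtain ⟨Lg, hLg, hLgc, hLg0, hLg1, hLg_cos⟩ := exists_strictMono_lift hgc hgo hg0 hgn
  have hrange : range Lf = range Lg := by
    rw [hLf.monotone.range_eq_Icc_of_continuous hLfc,
      hLg.monotone.range_eq_Icc_of_continuous hLgc]
    exact congrArg₂ Icc (hLf0.trans hLg0.symm) (hLf1.trans hLg1.symm)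
  obtain ⟨e, he⟩ := hLf.exists_orderIso_comp_eq hLg hrange
  refine ⟨e.toHomeomorph, e.monotone, fun x => Subtype.ext ?_⟩
  have hmem : ∀ y : I, π * (y : ℝ) ∈ Icc 0 π := fun y =>
    ⟨mul_nonneg pi_pos.le y.2.1, mul_le_of_le_one_right pi_pos.le y.2.2⟩
  refine mul_left_cancel₀ pi_ne_zero (injOn_cos (hmem (f x)) (hmem (g (e x))) ?_)
  rw [← hLf_cos, ← hLg_cos, OrderIso.coe_toHomeomorph, he]

end
end

section
/- If f ∈ Homeo_+[0,1] satisfies conditions (1)–(3) — namely: (1) the linear order of connected components of [0,1] ∖ Fix(f) is dense and has no least or greatest element, (2) Fix(f) is totally disconnected, and (3) the positive components and the negative components each form a subset of this linear order that is dense in it and unbounded in both directions — then for every integer d ≥ 1 the homeomorphism ⊕^d(f) also satisfies conditions (1)–(3). -/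
open unitInterval

noncomputable section

/-- The set of connected components of `[0,1] ∖ Fix(f)` for `f ∈ Homeo₊[0,1]`. -/
def Comps (f : OPH) : Set (Set I) :=
  {S | ∃ x : I, f.1 x ≠ x ∧ S = connectedComponentIn {y : I | f.1 y ≠ y} x}

/-- `S` lies entirely to the left of `T` in `[0,1]`: the strict order on the components of
`[0,1] ∖ Fix(f)` induced by their position in `[0,1]`. -/
def CompLT (S T : Set I) : Prop := ∀ x ∈ S, ∀ y ∈ T, x < y

/-- `S` is a positive interval of `f`: `f x > x` on `S`. -/
def PosComp (f : OPH) (S : Set I) : Prop := ∀ x ∈ S, x < f.1 x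

/-- `S` is a negative interval of `f`: `f x < x` on `S`. -/
def NegComp (f : OPH) (S : Set I) : Prop := ∀ x ∈ S, f.1 x < x

/-- Conditions (1)–(3) for `f ∈ Homeo₊[0,1]`:
(1) the linear order of components of `[0,1] ∖ Fix(f)` is dense without least or greatest
element; (2) `Fix(f)` is totally disconnected; (3) the positive components and the negative
components are each dense and unbounded in both directions in this linear order. -/
def GenericCond (f : OPH) : Prop :=
  (∀ S ∈ Comps f, ∀ T ∈ Comps f, CompLT S T → ∃ U ∈ Comps f, CompLT S U ∧ CompLT U T) ∧
  (∀ S ∈ Comps f, ∃ T ∈ Comps f, CompLT T S) ∧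
  (∀ S ∈ Comps f, ∃ T ∈ Comps f, CompLT S T) ∧
  IsTotallyDisconnected {x : I | f.1 x = x} ∧
  (∀ S ∈ Comps f, ∀ T ∈ Comps f, CompLT S T →
    ∃ U ∈ Comps f, PosComp f U ∧ CompLT S U ∧ CompLT U T) ∧
  (∀ S ∈ Comps f, ∃ T ∈ Comps f, PosComp f T ∧ CompLT T S) ∧
  (∀ S ∈ Comps f, ∃ T ∈ Comps f, PosComp f T ∧ CompLT S T) ∧
  (∀ S ∈ Comps f, ∀ T ∈ Comps f, CompLT S T →
    ∃ U ∈ Comps f, NegComp f U ∧ CompLT S U ∧ CompLT U T) ∧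
  (∀ S ∈ Comps f, ∃ T ∈ Comps f, NegComp f T ∧ CompLT T S) ∧
  (∀ S ∈ Comps f, ∃ T ∈ Comps f, NegComp f T ∧ CompLT S T)


/-! On the slab `[i/d, (i+1)/d]` the map `⊕^d(f)` is conjugate, by the affine map
`y ↦ (y + i)/d`, to `f` or to `f̃`, and `f̃` is conjugate to `f` by the order-reversing involution
`x ↦ 1 - x`, which exchanges positive and negative components. The slab endpoints are fixed, so
each component of `[0,1] ∖ Fix(⊕^d f)` is the image of a component of one piece, and the order of
components is the ordered sum of `d` copies of that of `f` or its reverse. Density and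
unboundedness survive order reversal and finite ordered sums, and a nondegenerate interval of
fixed points of `⊕^d(f)` would meet some slab in a nondegenerate interval, giving one for `f`
or `f̃`. -/

open Set Topology

lemma Topology.IsInducing.connectedComponentIn_eq_image {X Y : Type*} [TopologicalSpace X]
    [TopologicalSpace Y] {φ : X → Y} (hφ : IsInducing φ) {s : Set Y} {x : X} (hx : φ x ∈ s)
    (hrange : connectedComponentIn s (φ x) ⊆ range φ) :
    connectedComponentIn s (φ x) = φ '' connectedComponentIn (φ ⁻¹' s) x := by
  refine Subset.antisymm ?_ ?_
  · set C := connectedComponentIn s (φ x)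
    have hC : IsPreconnected (φ ⁻¹' C) := by
      rw [← hφ.isPreconnected_image, image_preimage_eq_of_subset hrange]
      exact isPreconnected_connectedComponentIn
    have hsub : φ ⁻¹' C ⊆ connectedComponentIn (φ ⁻¹' s) x :=
      hC.subset_connectedComponentIn (mem_connectedComponentIn hx)
        (preimage_mono (connectedComponentIn_subset _ _))
    calc C = φ '' (φ ⁻¹' C) := (image_preimage_eq_of_subset hrange).symm
      _ ⊆ _ := image_mono hsub
  · exact (isPreconnected_connectedComponentIn.image φ hφ.continuous.continuousOn)
      |>.subset_connectedComponentIn (mem_image_of_mem φ (mem_connectedComponentIn hx))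
        (image_subset_iff.mpr (connectedComponentIn_subset _ _))

lemma connectedComponentIn_subset_Ioo {α : Type*} [LinearOrder α] [TopologicalSpace α]
    [OrderClosedTopology α] {s : Set α} {a b x : α} (ha : a ∉ s) (hb : b ∉ s) (hx : x ∈ s)
    (hax : a < x) (hxb : x < b) : connectedComponentIn s x ⊆ Ioo a b := by
  have hord := (isPreconnected_connectedComponentIn (F := s) (x := x)).ordConnected
  have hxC := mem_connectedComponentIn hx
  intro z hz
  constructor
  · by_contra! h
    exact ha (connectedComponentIn_subset _ _ (hord.out hz hxC ⟨h, hax.le⟩))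
  · by_contra! h
    exact hb (connectedComponentIn_subset _ _ (hord.out hxC hz ⟨hxb.le, h⟩))

lemma isTotallyDisconnected_iff_not_Icc_subset {α : Type*} [ConditionallyCompleteLinearOrder α]
    [TopologicalSpace α] [OrderTopology α] [DenselyOrdered α] {s : Set α} :
    IsTotallyDisconnected s ↔ ∀ a b, a < b → ¬ Icc a b ⊆ s := by
  constructor
  · intro hs a b hab hsub
    exact hab.ne (hs _ hsub isPreconnected_Icc (left_mem_Icc.mpr hab.le)
      (right_mem_Icc.mpr hab.le))
  · intro hs t hts ht x hx y hy
    by_contra hxy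
    rcases lt_or_gt_of_ne hxy with h | h
    · exact hs x y h ((ht.Icc_subset hx hy).trans hts)
    · exact hs y x h ((ht.Icc_subset hy hx).trans hts)

namespace OPH

variable {g : OPH}

lemma map_zero (g : OPH) : g.1 0 = 0 := by
  obtain ⟨y, hy⟩ := g.1.surjective 0
  have h := g.2 (nonneg' : 0 ≤ y)
  rw [hy] at h
  exact le_antisymm h nonneg'

lemma map_one (g : OPH) : g.1 1 = 1 := by
  obtain ⟨y, hy⟩ := g.1.surjective 1
  have h := g.2 (le_one' : y ≤ 1)
  rw [hy] at h
  exact le_antisymm le_one' h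

lemma pos_of_apply_ne {y : I} (hy : g.1 y ≠ y) : 0 < y :=
  pos_iff_ne_zero.mpr fun h => hy (h ▸ g.map_zero)

lemma lt_one_of_apply_ne {y : I} (hy : g.1 y ≠ y) : y < 1 :=
  lt_of_le_of_ne le_one' fun h => hy (h ▸ g.map_one)

lemma tilde_apply (g : OPH) (x : I) : g.tilde.1 x = σ (g.1 (σ x)) := rfl

end OPH

lemma nonempty_of_mem_comps {g : OPH} {S : Set I} (hS : S ∈ Comps g) : S.Nonempty := by
  obtain ⟨x, hx, rfl⟩ := hS
  exact ⟨x, mem_connectedComponentIn hx⟩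

lemma subset_of_mem_comps {g : OPH} {S : Set I} (hS : S ∈ Comps g) :
    S ⊆ {y : I | g.1 y ≠ y} := by
  obtain ⟨x, -, rfl⟩ := hS
  exact connectedComponentIn_subset _ _

def DenseUnbounded (C : Set (Set I)) (P : Set I → Prop) : Prop :=
  (∀ S ∈ C, ∀ T ∈ C, CompLT S T → ∃ U ∈ C, P U ∧ CompLT S U ∧ CompLT U T) ∧
  (∀ S ∈ C, ∃ T ∈ C, P T ∧ CompLT T S) ∧
  (∀ S ∈ C, ∃ T ∈ C, P T ∧ CompLT S T)

lemma genericCond_iff (f : OPH) :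
    GenericCond f ↔ DenseUnbounded (Comps f) (fun _ => True) ∧
      IsTotallyDisconnected {x : I | f.1 x = x} ∧
      DenseUnbounded (Comps f) (PosComp f) ∧ DenseUnbounded (Comps f) (NegComp f) := by
  simp only [GenericCond, DenseUnbounded, true_and, and_assoc]

lemma compLT_image_iff_of_strictMono {e : I → I} (he : StrictMono e) {A B : Set I} :
    CompLT (e '' A) (e '' B) ↔ CompLT A B := by
  simp only [CompLT, forall_mem_image, he.lt_iff_lt]

lemma compLT_image_iff_of_strictAnti {e : I → I} (he : StrictAnti e) {A B : Set I} :
    CompLT (e '' A) (e '' B) ↔ CompLT B A := by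
  simp only [CompLT, forall_mem_image, he.lt_iff_gt]
  exact forall₂_comm

lemma CompLT.not_compLT {S T : Set I} (hS : S.Nonempty) (hT : T.Nonempty) (h : CompLT S T) :
    ¬ CompLT T S := by
  obtain ⟨x, hx⟩ := hS
  obtain ⟨y, hy⟩ := hT
  exact fun h' => (h x hx y hy).asymm (h' y hy x hx)

namespace DenseUnbounded

variable {C : Set (Set I)} {P Q : Set I → Prop}

lemma image_of_strictMono (h : DenseUnbounded C Q) {e : I → I} (he : StrictMono e)
    (hQP : ∀ A, Q A → P (e '' A)) : DenseUnbounded (image e '' C) P := by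
  obtain ⟨hdense, hbelow, habove⟩ := h
  simp only [DenseUnbounded, forall_mem_image, exists_mem_image,
    compLT_image_iff_of_strictMono he]
  exact ⟨fun A hA B hB hAB => (hdense A hA B hB hAB).imp fun U ⟨hU, hQ, hlt⟩ => ⟨hU, hQP U hQ, hlt⟩,
    fun A hA => (hbelow A hA).imp fun U ⟨hU, hQ, hlt⟩ => ⟨hU, hQP U hQ, hlt⟩,
    fun A hA => (habove A hA).imp fun U ⟨hU, hQ, hlt⟩ => ⟨hU, hQP U hQ, hlt⟩⟩

lemma image_of_strictAnti (h : DenseUnbounded C Q) {e : I → I} (he : StrictAnti e)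
    (hQP : ∀ A, Q A → P (e '' A)) : DenseUnbounded (image e '' C) P := by
  obtain ⟨hdense, hbelow, habove⟩ := h
  simp only [DenseUnbounded, forall_mem_image, exists_mem_image,
    compLT_image_iff_of_strictAnti he]
  exact ⟨fun A hA B hB hBA => (hdense B hB A hA hBA).imp
      fun U ⟨hU, hQ, hBU, hUA⟩ => ⟨hU, hQP U hQ, hUA, hBU⟩,
    fun A hA => (habove A hA).imp fun U ⟨hU, hQ, hlt⟩ => ⟨hU, hQP U hQ, hlt⟩,
    fun A hA => (hbelow A hA).imp fun U ⟨hU, hQ, hlt⟩ => ⟨hU, hQP U hQ, hlt⟩⟩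

lemma iUnion {ι : Type*} [LinearOrder ι] {D : ι → Set (Set I)}
    (hD : ∀ i, DenseUnbounded (D i) P) (hne : ∀ i, ∀ S ∈ D i, S.Nonempty)
    (hlt : ∀ i j, i < j → ∀ S ∈ D i, ∀ T ∈ D j, CompLT S T) :
    DenseUnbounded (⋃ i, D i) P := by
  simp only [DenseUnbounded, mem_iUnion, forall_exists_index]
  refine ⟨fun S i hS T j hT hST => ?_, fun S i hS => ?_, fun S i hS => ?_⟩
  · rcases lt_trichotomy i j with hij | rfl | hji
    · obtain ⟨U, hU, hP, hSU⟩ := (hD i).2.2 S hS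
      exact ⟨U, ⟨i, hU⟩, hP, hSU, hlt i j hij U hU T hT⟩
    · obtain ⟨U, hU, hP, hSU, hUT⟩ := (hD i).1 S hS T hT hST
      exact ⟨U, ⟨i, hU⟩, hP, hSU, hUT⟩
    · exact absurd (hlt j i hji T hT S hS) (hST.not_compLT (hne i S hS) (hne j T hT))
  · obtain ⟨U, hU, hP, hUS⟩ := (hD i).2.1 S hS
    exact ⟨U, ⟨i, hU⟩, hP, hUS⟩
  · obtain ⟨U, hU, hP, hSU⟩ := (hD i).2.2 S hS
    exact ⟨U, ⟨i, hU⟩, hP, hSU⟩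

end DenseUnbounded

section Tilde

variable {f : OPH}

lemma fix_tilde (f : OPH) : {x : I | f.tilde.1 x = x} = σ '' {x : I | f.1 x = x} := by
  rw [symm_involutive.image_eq_preimage_symm]
  ext x
  simp only [mem_ofPred_eq, mem_preimage, OPH.tilde_apply]
  exact ⟨fun h => by rw [← symm_inj, h, symm_symm], fun h => by rw [h, symm_symm]⟩

lemma nonfix_tilde (f : OPH) : {x : I | f.tilde.1 x ≠ x} = σ '' {x : I | f.1 x ≠ x} := by
  rw [symm_involutive.image_eq_preimage_symm, ← compl_ofPred, ← compl_ofPred, fix_tilde,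
    symm_involutive.image_eq_preimage_symm, preimage_compl]

lemma comps_tilde (f : OPH) : Comps f.tilde = image σ '' Comps f := by
  have himage {y : I} (hy : f.1 y ≠ y) :
      σ '' connectedComponentIn {x | f.1 x ≠ x} y
        = connectedComponentIn {x | f.tilde.1 x ≠ x} (σ y) := by
    rw [nonfix_tilde]
    exact symmHomeomorph.image_connectedComponentIn hy
  ext S
  constructor
  · rintro ⟨x, hx, rfl⟩
    have hσx : f.1 (σ x) ≠ σ x := fun h => hx (by rw [OPH.tilde_apply, h, symm_symm])
    exact ⟨_, ⟨σ x, hσx, rfl⟩, by rw [himage hσx, symm_symm]⟩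
  · rintro ⟨_, ⟨y, hy, rfl⟩, rfl⟩
    exact ⟨σ y, fun h => hy (symm_inj.mp (by rwa [OPH.tilde_apply, symm_symm] at h)),
      himage hy⟩

lemma posComp_tilde_image {A : Set I} (h : NegComp f A) : PosComp f.tilde (σ '' A) := by
  rintro _ ⟨a, ha, rfl⟩
  rw [OPH.tilde_apply, symm_symm]
  exact symm_lt_symm.mpr (h a ha)

lemma negComp_tilde_image {A : Set I} (h : PosComp f A) : NegComp f.tilde (σ '' A) := by
  rintro _ ⟨a, ha, rfl⟩
  rw [OPH.tilde_apply, symm_symm]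
  exact symm_lt_symm.mpr (h a ha)

lemma GenericCond.tilde (hf : GenericCond f) : GenericCond f.tilde := by
  have hσ : StrictAnti σ := fun _ _ h => symm_lt_symm.mpr h
  obtain ⟨hall, hfix, hpos, hneg⟩ := (genericCond_iff f).mp hf
  rw [genericCond_iff, comps_tilde, fix_tilde,
    show σ = symmHomeomorph from rfl, symmHomeomorph.isEmbedding.isTotallyDisconnected_image]
  exact ⟨hall.image_of_strictAnti hσ fun _ _ => trivial, hfix,
    hneg.image_of_strictAnti hσ fun _ => posComp_tilde_image,
    hpos.image_of_strictAnti hσ fun _ => negComp_tilde_image⟩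

end Tilde

section Slab

/-- `y ↦ (y + i)/d`, onto the slab `[i/d, (i+1)/d]`; the projection to `I` is only there to
make it total and is inactive when `i < d`. -/
def slabMap (d i : ℕ) (y : I) : I := projIcc 0 1 zero_le_one (((y : ℝ) + i) / d)

variable {d i j : ℕ}

lemma coe_slabMap (hi : i < d) (y : I) : (slabMap d i y : ℝ) = ((y : ℝ) + i) / d := by
  have hd : (0 : ℝ) < d := by exact_mod_cast (Nat.zero_le i).trans_lt hi
  have hid : (i : ℝ) + 1 ≤ d := by exact_mod_cast hi
  rw [slabMap, projIcc_of_mem]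
  constructor
  · exact div_nonneg (add_nonneg y.2.1 i.cast_nonneg) hd.le
  · rw [div_le_one hd]
    linarith [y.2.2]

lemma slabMap_strictMono (hi : i < d) : StrictMono (slabMap d i) := by
  have hd : (0 : ℝ) < d := by exact_mod_cast (Nat.zero_le i).trans_lt hi
  intro y z hyz
  rw [← Subtype.coe_lt_coe, coe_slabMap hi, coe_slabMap hi]
  gcongr

lemma continuous_slabMap : Continuous (slabMap d i) := by
  unfold slabMap
  fun_prop

lemma isEmbedding_slabMap (hi : i < d) : IsEmbedding (slabMap d i) :=
  (continuous_slabMap.isClosedEmbedding (slabMap_strictMono hi).injective).isEmbedding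

lemma Icc_subset_range_slabMap : Icc (slabMap d i 0) (slabMap d i 1) ⊆ range (slabMap d i) :=
  intermediate_value_univ 0 1 continuous_slabMap

lemma slabMap_lt_slabMap (hij : i < j) (hj : j < d) {y : I} (hy : y < 1) (z : I) :
    slabMap d i y < slabMap d j z := by
  have hd : (0 : ℝ) < d := by exact_mod_cast (Nat.zero_le j).trans_lt hj
  have hij' : (i : ℝ) + 1 ≤ j := by exact_mod_cast hij
  have hy' : (y : ℝ) < 1 := hy
  rw [← Subtype.coe_lt_coe, coe_slabMap (hij.trans hj), coe_slabMap hj]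
  rw [div_lt_div_iff_of_pos_right hd]
  linarith [z.2.1]

lemma exists_slabMap_zero_le_lt (hd : 0 < d) {x : I} (hx : x < 1) :
    ∃ i < d, slabMap d i 0 ≤ x ∧ x < slabMap d i 1 := by
  have hd' : (0 : ℝ) < d := by exact_mod_cast hd
  have hx' : (x : ℝ) < 1 := hx
  have hdx : 0 ≤ (d : ℝ) * x := mul_nonneg d.cast_nonneg x.2.1
  set i := ⌊(d : ℝ) * x⌋₊
  have hi : i < d := by
    rw [Nat.floor_lt hdx]
    nlinarith
  refine ⟨i, hi, ?_, ?_⟩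
  · rw [← Subtype.coe_le_coe, coe_slabMap hi, Icc.coe_zero, zero_add, div_le_iff₀ hd', mul_comm]
    exact Nat.floor_le hdx
  · rw [← Subtype.coe_lt_coe, coe_slabMap hi, Icc.coe_one, lt_div_iff₀ hd', mul_comm, add_comm]
    exact Nat.lt_floor_add_one _

end Slab

section Oplus

/-- The map `g_i` of `⊕^d(f) = ⊕(g_0, …, g_{d-1})`. -/
def oplusPiece (f : OPH) (i : ℕ) : OPH := if Even i then f else f.tilde

lemma GenericCond.oplusPiece {f : OPH} (hf : GenericCond f) (i : ℕ) :
    GenericCond (oplusPiece f i) := by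
  unfold _root_.oplusPiece
  split_ifs
  exacts [hf, hf.tilde]

variable {f F : OPH} {d i : ℕ}

lemma apply_slabMap (hF : OplusProp f d F.1) (hi : i < d) (y : I) :
    F.1 (slabMap d i y) = slabMap d i ((oplusPiece f i).1 y) := by
  have hd : (0 : ℝ) < d := by exact_mod_cast (Nat.zero_le i).trans_lt hi
  have hx := coe_slabMap hi y
  have hy : (d : ℝ) * slabMap d i y - i = y := by
    rw [hx]
    field_simp
    ring
  have hF' := hF i hi (slabMap d i y)
    (by rw [hx]; exact div_le_div_of_nonneg_right (by linarith [y.2.1]) hd.le)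
    (by rw [hx]; exact div_le_div_of_nonneg_right (by linarith [y.2.2]) hd.le) (hy ▸ y.2)
  have hpiece : (oplusPiece f i).1 = if Even i then f.1 else f.tilde.1 := by
    unfold oplusPiece
    split_ifs <;> rfl
  rw [show (⟨_, hy ▸ y.2⟩ : I) = y from Subtype.ext hy, ← hpiece] at hF'
  apply Subtype.ext
  rw [hF', coe_slabMap hi]
  ring

lemma apply_slabMap_eq_iff (hF : OplusProp f d F.1) (hi : i < d) (y : I) :
    F.1 (slabMap d i y) = slabMap d i y ↔ (oplusPiece f i).1 y = y := by
  rw [apply_slabMap hF hi, (slabMap_strictMono hi).injective.eq_iff]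

lemma connectedComponentIn_slabMap (hF : OplusProp f d F.1) (hi : i < d) {y : I}
    (hy : (oplusPiece f i).1 y ≠ y) :
    connectedComponentIn {x | F.1 x ≠ x} (slabMap d i y)
      = slabMap d i '' connectedComponentIn {y | (oplusPiece f i).1 y ≠ y} y := by
  have hpre : slabMap d i ⁻¹' {x | F.1 x ≠ x} = {y | (oplusPiece f i).1 y ≠ y} := by
    ext z
    exact (apply_slabMap_eq_iff hF hi z).not
  have hfix (z : I) (hz : (oplusPiece f i).1 z = z) : slabMap d i z ∉ {x | F.1 x ≠ x} :=
    not_not.mpr ((apply_slabMap_eq_iff hF hi z).mpr hz)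
  have hmono := slabMap_strictMono hi
  rw [← hpre]
  refine (isEmbedding_slabMap hi).isInducing.connectedComponentIn_eq_image
    ((apply_slabMap_eq_iff hF hi y).not.mpr hy) ?_
  -- the slab endpoints are fixed, so the component stays inside the slab
  exact (connectedComponentIn_subset_Ioo (hfix 0 (OPH.map_zero _)) (hfix 1 (OPH.map_one _))
    ((apply_slabMap_eq_iff hF hi y).not.mpr hy) (hmono (OPH.pos_of_apply_ne hy))
    (hmono (OPH.lt_one_of_apply_ne hy))).trans (Ioo_subset_Icc_self.trans Icc_subset_range_slabMap)

lemma comps_oplus (hd : 0 < d) (hF : OplusProp f d F.1) :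
    Comps F = ⋃ i : Fin d, image (slabMap d i) '' Comps (oplusPiece f i) := by
  ext S
  simp only [mem_iUnion]
  constructor
  · rintro ⟨x, hx, rfl⟩
    obtain ⟨i, hi, h0, h1⟩ := exists_slabMap_zero_le_lt hd (F.lt_one_of_apply_ne hx)
    obtain ⟨y, rfl⟩ := Icc_subset_range_slabMap ⟨h0, h1.le⟩
    have hy : (oplusPiece f i).1 y ≠ y := (apply_slabMap_eq_iff hF hi y).not.mp hx
    exact ⟨⟨i, hi⟩, _, ⟨y, hy, rfl⟩, (connectedComponentIn_slabMap hF hi hy).symm⟩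
  · rintro ⟨⟨i, hi⟩, _, ⟨y, hy, rfl⟩, rfl⟩
    exact ⟨slabMap d i y, (apply_slabMap_eq_iff hF hi y).not.mpr hy,
      (connectedComponentIn_slabMap hF hi hy).symm⟩

lemma posComp_image_slabMap (hF : OplusProp f d F.1) (hi : i < d) {A : Set I}
    (h : PosComp (oplusPiece f i) A) : PosComp F (slabMap d i '' A) := by
  rintro _ ⟨a, ha, rfl⟩
  rw [apply_slabMap hF hi]
  exact slabMap_strictMono hi (h a ha)

lemma negComp_image_slabMap (hF : OplusProp f d F.1) (hi : i < d) {A : Set I}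
    (h : NegComp (oplusPiece f i) A) : NegComp F (slabMap d i '' A) := by
  rintro _ ⟨a, ha, rfl⟩
  rw [apply_slabMap hF hi]
  exact slabMap_strictMono hi (h a ha)

lemma DenseUnbounded.oplus {P : Set I → Prop} {Q : ℕ → Set I → Prop}
    (hQ : ∀ i, DenseUnbounded (Comps (oplusPiece f i)) (Q i))
    (hQP : ∀ i < d, ∀ A, Q i A → P (slabMap d i '' A)) :
    DenseUnbounded (⋃ i : Fin d, image (slabMap d i) '' Comps (oplusPiece f i)) P := by
  refine DenseUnbounded.iUnion (fun i => (hQ i).image_of_strictMono (slabMap_strictMono i.2)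
    (hQP i i.2)) ?_ ?_
  · rintro i _ ⟨A, hA, rfl⟩
    exact (nonempty_of_mem_comps hA).image _
  · rintro i j hij _ ⟨A, hA, rfl⟩ _ ⟨B, -, rfl⟩ _ ⟨a, ha, rfl⟩ _ ⟨b, -, rfl⟩
    exact slabMap_lt_slabMap hij j.2 (OPH.lt_one_of_apply_ne (subset_of_mem_comps hA ha)) b

lemma isTotallyDisconnected_fix_oplus (hd : 0 < d) (hF : OplusProp f d F.1)
    (hfix : ∀ i, IsTotallyDisconnected {y : I | (oplusPiece f i).1 y = y}) :
    IsTotallyDisconnected {x : I | F.1 x = x} := by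
  rw [isTotallyDisconnected_iff_not_Icc_subset]
  intro a b hab hsub
  obtain ⟨i, hi, h0, h1⟩ := exists_slabMap_zero_le_lt hd (hab.trans_le le_one')
  have hslab : Icc a (min b (slabMap d i 1)) ⊆ slabMap d i '' {y | (oplusPiece f i).1 y = y} := by
    intro x hx
    obtain ⟨y, rfl⟩ := Icc_subset_range_slabMap ⟨h0.trans hx.1, hx.2.trans (min_le_right _ _)⟩
    exact ⟨y, (apply_slabMap_eq_iff hF hi y).mp (hsub ⟨hx.1, hx.2.trans (min_le_left _ _)⟩), rfl⟩
  exact isTotallyDisconnected_iff_not_Icc_subset.mp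
    ((isEmbedding_slabMap hi).isTotallyDisconnected_image.mpr (hfix i)) _ _ (lt_min hab h1) hslab

end Oplus

/-- If `f ∈ Homeo₊[0,1]` satisfies conditions (1)–(3), then so does `⊕^d(f)` for every
`d ≥ 1` (where `F = ⊕^d(f)` is characterized by the defining formula `OplusProp f d F`). -/
theorem genericCond_oplus (f : OPH) (hf : GenericCond f) (d : ℕ) (hd : 1 ≤ d)
    (F : OPH) (hF : OplusProp f d (F.1 : I → I)) : GenericCond F := by
  have hpiece i := (genericCond_iff _).mp (hf.oplusPiece i)
  rw [genericCond_iff, comps_oplus hd hF]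
  exact ⟨DenseUnbounded.oplus (fun i => (hpiece i).1) fun _ _ _ _ => trivial,
    isTotallyDisconnected_fix_oplus hd hF fun i => (hpiece i).2.1,
    DenseUnbounded.oplus (fun i => (hpiece i).2.2.1) fun _ hi _ => posComp_image_slabMap hF hi,
    DenseUnbounded.oplus (fun i => (hpiece i).2.2.2) fun _ hi _ => negComp_image_slabMap hF hi⟩

end
end

section
/- Let 0 < δ < 1/4 and let d ≥ 1 be an integer. If f, g ∈ Homeo_+[0,1] satisfy d_sup(f, g) ≥ δ/d, then there exists x ∈ [0,1] such that at least one of the following holds: (1) |T_d(f(x)) − T_d(g(x))| ≥ δ; or (2) |T_d(f(x)) − T_d(g(x))| ≥ δ/2 and at least one of T_d(f(x)), T_d(g(x)) belongs to {0, 1}. -/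
open unitInterval

noncomputable section

-- auxiliary lemmas

lemma tentFun_one_mul (d : ℕ) (x : ℝ) : tentFun d x = tentFun 1 ((d : ℝ) * x) := by
  simp [tentFun]

lemma tentI_coe (d : ℕ) (y : I) : (tentI d y : ℝ) = tentFun 1 ((d : ℝ) * (y : ℝ)) := by
  rw [← tentFun_one_mul]; rfl

lemma tent_piece (k : ℤ) (s : ℝ) (h1 : (k : ℝ) ≤ s) (h2 : s ≤ (k : ℝ) + 1) :
    tentFun 1 s = if Even k then s - (k : ℝ) else (k : ℝ) + 1 - s := by
  unfold tentFun
  simp only [Nat.cast_one, one_mul]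
  rcases eq_or_lt_of_le h2 with he | hlt
  · have hfl : ⌊s⌋ = k + 1 := by
      rw [he]
      rw [show ((k : ℝ) + 1) = ((k + 1 : ℤ) : ℝ) by push_cast; ring]
      exact Int.floor_intCast _
    rw [hfl]
    have hpar : Even (k + 1) ↔ ¬ Even k := Int.even_add_one
    rcases Int.even_or_odd k with hk | hk
    · have : ¬ Even (k + 1) := by simp [hpar, hk]
      simp only [this, if_neg, hk, if_pos]
      push_cast
      try rw [he]
      try ring
    · have hk' : ¬ Even k := Int.not_even_iff_odd.mpr hk
      have : Even (k + 1) := hpar.mpr hk'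
      simp only [this, if_pos, hk', if_neg]
      push_cast
      try rw [he]
      try ring
  · have hfl : ⌊s⌋ = k := Int.floor_eq_iff.mpr ⟨h1, by push_cast; linarith⟩
    rw [hfl]
    split_ifs <;> [skip; skip] <;> push_cast <;> ring

lemma tent_int (k : ℤ) : tentFun 1 (k : ℝ) = if Even k then 0 else 1 := by
  rw [tent_piece k (k : ℝ) le_rfl (by linarith)]
  split_ifs <;> ring

lemma half_abs {c X Y : ℝ} (h : c ≤ X - Y ∨ c ≤ Y - X) : c ≤ |X - Y| := by
  rcases h with h | h
  · exact h.trans (le_abs_self _)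
  · rw [abs_sub_comm]; exact h.trans (le_abs_self _)

lemma OPH.strictMono (f : OPH) : StrictMono f.1 :=
  f.2.strictMono_of_injective f.1.injective

lemma OPH.le_iff (f : OPH) {x y : I} : f.1 x ≤ f.1 y ↔ x ≤ y :=
  (OPH.strictMono f).le_iff_le

lemma OPH.map_zero_s15 (f : OPH) : f.1 (0 : I) = 0 := by
  obtain ⟨y, hy⟩ := f.1.surjective (0 : I)
  have h1 : f.1 (0 : I) ≤ f.1 y := f.2 unitInterval.nonneg'
  rw [hy] at h1
  exact le_antisymm h1 unitInterval.nonneg'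

set_option maxHeartbeats 2000000 in
lemma key (δ : ℝ) (hδ0 : 0 < δ) (hδ : δ < 1 / 4) (d : ℕ) (hd : 1 ≤ d)
    (A B : OPH) (x₀ : I) (h₀ : δ / d ≤ (A.1 x₀ : ℝ) - B.1 x₀) :
    ∃ x : I,
      δ ≤ |(tentI d (A.1 x) : ℝ) - (tentI d (B.1 x) : ℝ)| ∨
      (δ / 2 ≤ |(tentI d (A.1 x) : ℝ) - (tentI d (B.1 x) : ℝ)| ∧
        ((tentI d (A.1 x) : ℝ) = 0 ∨ (tentI d (A.1 x) : ℝ) = 1 ∨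
         (tentI d (B.1 x) : ℝ) = 0 ∨ (tentI d (B.1 x) : ℝ) = 1)) := by
  have dpos : (0 : ℝ) < d := by exact_mod_cast Nat.lt_of_lt_of_le Nat.zero_lt_one hd
  set e : I → ℝ := fun x => d * ((A.1 x : ℝ) - B.1 x) with he_def
  have hecont : Continuous e := by
    apply Continuous.mul continuous_const
    exact (continuous_subtype_val.comp A.1.continuous).sub
      (continuous_subtype_val.comp B.1.continuous)
  set E : ℝ → ℝ := fun t => e (Set.projIcc 0 1 zero_le_one t) with hE_def
  have hEcont : Continuous E := hecont.comp (continuous_projIcc)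
  have hE : ∀ x : I, E (x : ℝ) = e x := by
    intro x
    show e (Set.projIcc 0 1 zero_le_one (x : ℝ)) = e x
    rw [Set.projIcc_val]
  have hE0 : E 0 = 0 := by
    have : ((0 : I) : ℝ) = 0 := rfl
    rw [← this, hE, he_def]
    simp [OPH.map_zero_s15]
  have hEx₀ : δ ≤ E (x₀ : ℝ) := by
    rw [hE, he_def]
    have := mul_le_mul_of_nonneg_left h₀ (le_of_lt dpos)
    calc δ = d * (δ / d) := by field_simp
    _ ≤ _ := this
  -- first crossing point
  set S : Set ℝ := Set.Icc (0 : ℝ) (x₀ : ℝ) ∩ {t | E t = δ} with hS_def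
  have hSne : S.Nonempty := by
    have hsub := intermediate_value_Icc (unitInterval.nonneg x₀) hEcont.continuousOn
    have : δ ∈ Set.Icc (E 0) (E (x₀ : ℝ)) := by
      rw [hE0]; exact ⟨le_of_lt hδ0, hEx₀⟩
    obtain ⟨t, ht, htE⟩ := hsub this
    exact ⟨t, ht, htE⟩
  have hSclosed : IsClosed S :=
    IsClosed.inter isClosed_Icc (isClosed_eq hEcont continuous_const)
  have hSbdd : BddBelow S := BddBelow.mono Set.inter_subset_left bddBelow_Icc
  set t₁ : ℝ := sInf S with ht₁_def
  have ht₁S : t₁ ∈ S := IsClosed.csInf_mem hSclosed hSne hSbdd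
  have ht₁I : t₁ ∈ unitInterval :=
    ⟨ht₁S.1.1, le_trans ht₁S.1.2 (unitInterval.le_one x₀)⟩
  set x₁ : I := ⟨t₁, ht₁I⟩ with hx₁_def
  have he₁ : e x₁ = δ := by rw [← hE]; exact ht₁S.2
  have hleft : ∀ x : I, x ≤ x₁ → e x ≤ δ := by
    intro x hx
    by_contra hcon
    push_neg at hcon
    have hx' : (x : ℝ) ≤ t₁ := hx
    have hsub := intermediate_value_Icc (unitInterval.nonneg x) hEcont.continuousOn
    have hmem : δ ∈ Set.Icc (E 0) (E (x : ℝ)) := by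
      rw [hE0, hE]; exact ⟨le_of_lt hδ0, le_of_lt hcon⟩
    obtain ⟨t, ht, htE⟩ := hsub hmem
    have htS : t ∈ S := ⟨⟨ht.1, le_trans (le_trans ht.2 hx') ht₁S.1.2⟩, htE⟩
    have : t₁ ≤ t := csInf_le hSbdd htS
    have htx : t = (x : ℝ) := le_antisymm ht.2 (le_trans hx' this)
    rw [htx, hE] at htE
    linarith
  -- main case analysis
  set α : ℝ := d * (B.1 x₁ : ℝ) with hα_def
  have hα0 : 0 ≤ α := mul_nonneg (le_of_lt dpos) (unitInterval.nonneg _)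
  have hαA : (d : ℝ) * (A.1 x₁ : ℝ) = α + δ := by
    have h : (d:ℝ) * ((A.1 x₁ : ℝ) - B.1 x₁) = δ := he₁
    rw [hα_def]; linarith [h, mul_sub (d:ℝ) ((A.1 x₁ : ℝ)) ((B.1 x₁ : ℝ))]
  have hαd : α + δ ≤ d := by
    have h1 : (A.1 x₁ : ℝ) ≤ 1 := unitInterval.le_one _
    nlinarith
  set k : ℤ := ⌈α⌉ with hk_def
  by_cases hk2 : (k : ℝ) ≤ α + δ
  case neg =>
    push_neg at hk2
    set m : ℤ := ⌊α + δ⌋ with hm_def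
    have hm2 : α + δ < (m : ℝ) + 1 := Int.lt_floor_add_one _
    have hm1 : (m : ℝ) ≤ α := by
      by_contra hcon
      push_neg at hcon
      have h1 : k ≤ m := Int.ceil_le.mpr (le_of_lt hcon)
      have h2 : (k : ℝ) ≤ m := by exact_mod_cast h1
      have h3 : (m : ℝ) ≤ α + δ := Int.floor_le _
      linarith
    refine ⟨x₁, Or.inl ?_⟩
    rw [tentI_coe, tentI_coe, hαA]
    rw [tent_piece m (α + δ) (by linarith) (by linarith),
        tent_piece m α hm1 (by linarith)]
    split_ifs with hev
    · apply half_abs; left; linarith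
    · apply half_abs; right; linarith
  case pos =>
    have hk1 : α ≤ (k : ℝ) := Int.le_ceil α
    have hk0 : (0 : ℝ) ≤ (k : ℝ) := le_trans hα0 hk1
    have hkd : (k : ℝ) ≤ d := le_trans hk2 hαd
    have memk : (k : ℝ) / d ∈ unitInterval :=
      ⟨div_nonneg hk0 (le_of_lt dpos), by rw [div_le_one dpos]; exact hkd⟩
    obtain ⟨x₂, hx₂e⟩ : ∃ x : I, A.1 x = ⟨(k : ℝ) / d, memk⟩ := ⟨_, A.1.apply_symm_apply _⟩
    have hAx₂ : (A.1 x₂ : ℝ) = (k : ℝ) / d := by rw [hx₂e]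
    have hdAx₂ : (d : ℝ) * (A.1 x₂ : ℝ) = (k : ℝ) := by
      rw [hAx₂]; field_simp
    have hx₂₁ : x₂ ≤ x₁ := by
      rw [← OPH.le_iff A, ← Subtype.coe_le_coe]
      rw [hAx₂, div_le_iff₀ dpos]
      nlinarith
    have heA2 : (d : ℝ) * ((A.1 x₂ : ℝ) - B.1 x₂) ≤ δ := hleft x₂ hx₂₁
    obtain ⟨β₂, hβ₂_def⟩ : ∃ y : ℝ, y = (d : ℝ) * (B.1 x₂ : ℝ) := ⟨_, rfl⟩
    have hβ₂k : (k : ℝ) - δ ≤ β₂ := by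
      rw [hβ₂_def]
      nlinarith [mul_sub (d:ℝ) ((A.1 x₂ : ℝ)) ((B.1 x₂ : ℝ))]
    have hβ₂α : β₂ ≤ α := by
      have h1 : B.1 x₂ ≤ B.1 x₁ := B.2 hx₂₁
      have h2 : (B.1 x₂ : ℝ) ≤ (B.1 x₁ : ℝ) := h1
      rw [hβ₂_def, hα_def]
      nlinarith
    have hβ₂kk : β₂ ≤ (k : ℝ) := le_trans hβ₂α hk1
    have hTB2 : (tentI d (B.1 x₂) : ℝ) =
        if Even (k - 1) then β₂ - ((k - 1 : ℤ) : ℝ) else ((k - 1 : ℤ) : ℝ) + 1 - β₂ := by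
      rw [tentI_coe, ← hβ₂_def]
      exact tent_piece (k - 1) β₂ (by push_cast; linarith) (by push_cast; linarith)
    have hTA2 : (tentI d (A.1 x₂) : ℝ) = if Even k then (0 : ℝ) else 1 := by
      rw [tentI_coe, hdAx₂, tent_int]
    by_cases h3a : δ / 2 ≤ (k : ℝ) - β₂
    · refine ⟨x₂, Or.inr ⟨?_, ?_⟩⟩
      · rw [hTA2, hTB2]
        rcases Int.even_or_odd k with hev | hodd
        · have h1 : ¬ Even (k - 1) := by simp [Int.even_sub_one, hev]
          rw [if_pos hev, if_neg h1]
          apply half_abs; right; push_cast; linarith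
        · have hke : ¬ Even k := Int.not_even_iff_odd.mpr hodd
          have h1 : Even (k - 1) := Int.even_sub_one.mpr hke
          rw [if_neg hke, if_pos h1]
          apply half_abs; left; push_cast; linarith
      · rcases Int.even_or_odd k with hev | hodd
        · exact Or.inl (by rw [hTA2, if_pos hev])
        · exact Or.inr (Or.inl (by rw [hTA2, if_neg (Int.not_even_iff_odd.mpr hodd)]))
    · push_neg at h3a
      -- x₃ : B-preimage of k/d
      obtain ⟨x₃, hx₃e⟩ : ∃ x : I, B.1 x = ⟨(k : ℝ) / d, memk⟩ := ⟨_, B.1.apply_symm_apply _⟩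
      have hBx₃ : (B.1 x₃ : ℝ) = (k : ℝ) / d := by rw [hx₃e]
      have hdBx₃ : (d : ℝ) * (B.1 x₃ : ℝ) = (k : ℝ) := by
        rw [hBx₃]; field_simp
      have hx₁₃ : x₁ ≤ x₃ := by
        have hb : (B.1 x₁ : ℝ) = α / d := by rw [hα_def]; field_simp
        rw [← OPH.le_iff B, ← Subtype.coe_le_coe, hBx₃, hb]
        gcongr
      obtain ⟨γ₃, hγ₃_def⟩ : ∃ y : ℝ, y = (d : ℝ) * (A.1 x₃ : ℝ) := ⟨_, rfl⟩
      have hγ₃ : α + δ ≤ γ₃ := by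
        have h1 : A.1 x₁ ≤ A.1 x₃ := A.2 hx₁₃
        have h2 : (A.1 x₁ : ℝ) ≤ (A.1 x₃ : ℝ) := h1
        have h3 := mul_le_mul_of_nonneg_left h2 (le_of_lt dpos)
        rw [hγ₃_def]; linarith
      have hγ₃k : (k : ℝ) + δ / 2 < γ₃ := by linarith
      have hγ₃d : γ₃ ≤ d := by
        have h1 : (A.1 x₃ : ℝ) ≤ 1 := unitInterval.le_one _
        have h2 := mul_le_mul_of_nonneg_left h1 (le_of_lt dpos)
        rw [mul_one] at h2
        rw [hγ₃_def]; exact h2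
      have hTB3 : (tentI d (B.1 x₃) : ℝ) = if Even k then (0 : ℝ) else 1 := by
        rw [tentI_coe, hdBx₃, tent_int]
      by_cases h3bi : γ₃ ≤ (k : ℝ) + 2 - δ / 2
      · refine ⟨x₃, Or.inr ⟨?_, ?_⟩⟩
        · rcases le_or_gt γ₃ ((k : ℝ) + 1) with hle | hlt
          · have hTA3 : (tentI d (A.1 x₃) : ℝ) =
                if Even k then γ₃ - (k : ℝ) else (k : ℝ) + 1 - γ₃ := by
              rw [tentI_coe, ← hγ₃_def]
              exact tent_piece k γ₃ (by linarith) hle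
            rw [hTA3, hTB3]
            rcases Int.even_or_odd k with hev | hodd
            · rw [if_pos hev, if_pos hev]; apply half_abs; left; linarith
            · have hke : ¬ Even k := Int.not_even_iff_odd.mpr hodd
              rw [if_neg hke, if_neg hke]; apply half_abs; right; linarith
          · have hTA3 : (tentI d (A.1 x₃) : ℝ) =
                if Even (k + 1) then γ₃ - ((k + 1 : ℤ) : ℝ) else ((k + 1 : ℤ) : ℝ) + 1 - γ₃ := by
              rw [tentI_coe, ← hγ₃_def]
              exact tent_piece (k + 1) γ₃ (by push_cast; linarith) (by push_cast; linarith)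
            rw [hTA3, hTB3]
            rcases Int.even_or_odd k with hev | hodd
            · have h1 : ¬ Even (k + 1) := by simp [Int.even_add_one, hev]
              rw [if_neg h1, if_pos hev]; apply half_abs; left; push_cast; linarith
            · have hke : ¬ Even k := Int.not_even_iff_odd.mpr hodd
              have h1 : Even (k + 1) := Int.even_add_one.mpr hke
              rw [if_pos h1, if_neg hke]; apply half_abs; right; push_cast; linarith
        · rcases Int.even_or_odd k with hev | hodd
          · exact Or.inr (Or.inr (Or.inl (by rw [hTB3, if_pos hev])))
          · exact Or.inr (Or.inr (Or.inr (by rw [hTB3, if_neg (Int.not_even_iff_odd.mpr hodd)])))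
      · push_neg at h3bi
        have hk1γ : (k : ℝ) + 1 < γ₃ := by linarith
        have hk1d : (k : ℝ) + 1 ≤ d := le_trans (le_of_lt hk1γ) hγ₃d
        have memk1 : ((k : ℝ) + 1) / d ∈ unitInterval :=
          ⟨div_nonneg (by linarith) (le_of_lt dpos), by rw [div_le_one dpos]; exact hk1d⟩
        obtain ⟨x₄, hx₄e⟩ : ∃ x : I, A.1 x = ⟨((k : ℝ) + 1) / d, memk1⟩ :=
          ⟨_, A.1.apply_symm_apply _⟩
        have hAx₄ : (A.1 x₄ : ℝ) = ((k : ℝ) + 1) / d := by rw [hx₄e]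
        have hdAx₄ : (d : ℝ) * (A.1 x₄ : ℝ) = ((k + 1 : ℤ) : ℝ) := by
          rw [hAx₄]; push_cast; field_simp
        have hx₂₄ : x₂ ≤ x₄ := by
          rw [← OPH.le_iff A, ← Subtype.coe_le_coe, hAx₂, hAx₄]
          gcongr
          try linarith
        have hx₄₃ : x₄ ≤ x₃ := by
          have ha3 : (A.1 x₃ : ℝ) = γ₃ / d := by rw [hγ₃_def]; field_simp
          rw [← OPH.le_iff A, ← Subtype.coe_le_coe, hAx₄, ha3]
          gcongr
          try linarith
        obtain ⟨β₄, hβ₄_def⟩ : ∃ y : ℝ, y = (d : ℝ) * (B.1 x₄ : ℝ) := ⟨_, rfl⟩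
        have hβ₄l : β₂ ≤ β₄ := by
          have h1 : (B.1 x₂ : ℝ) ≤ (B.1 x₄ : ℝ) := B.2 hx₂₄
          rw [hβ₄_def, hβ₂_def]
          exact mul_le_mul_of_nonneg_left h1 (le_of_lt dpos)
        have hβ₄u : β₄ ≤ (k : ℝ) := by
          have h1 : (B.1 x₄ : ℝ) ≤ (B.1 x₃ : ℝ) := B.2 hx₄₃
          have h2 := mul_le_mul_of_nonneg_left h1 (le_of_lt dpos)
          rw [hβ₄_def]; linarith
        have hTA4 : (tentI d (A.1 x₄) : ℝ) = if Even (k + 1) then (0 : ℝ) else 1 := by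
          rw [tentI_coe, hdAx₄, tent_int]
        have hTB4 : (tentI d (B.1 x₄) : ℝ) =
            if Even (k - 1) then β₄ - ((k - 1 : ℤ) : ℝ) else ((k - 1 : ℤ) : ℝ) + 1 - β₄ := by
          rw [tentI_coe, ← hβ₄_def]
          exact tent_piece (k - 1) β₄ (by push_cast; linarith) (by push_cast; linarith)
        refine ⟨x₄, Or.inr ⟨?_, ?_⟩⟩
        · rw [hTA4, hTB4]
          rcases Int.even_or_odd k with hev | hodd
          · have h1 : ¬ Even (k + 1) := by simp [Int.even_add_one, hev]
            have h2 : ¬ Even (k - 1) := by simp [Int.even_sub_one, hev]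
            rw [if_neg h1, if_neg h2]
            apply half_abs; left; push_cast; linarith
          · have hke : ¬ Even k := Int.not_even_iff_odd.mpr hodd
            have h1 : Even (k + 1) := Int.even_add_one.mpr hke
            have h2 : Even (k - 1) := Int.even_sub_one.mpr hke
            rw [if_pos h1, if_pos h2]
            apply half_abs; right; push_cast; linarith
        · rcases Int.even_or_odd k with hev | hodd
          · have h1 : ¬ Even (k + 1) := by simp [Int.even_add_one, hev]
            exact Or.inr (Or.inl (by rw [hTA4, if_neg h1]))
          · have h1 : Even (k + 1) := Int.even_add_one.mpr (Int.not_even_iff_odd.mpr hodd)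
            exact Or.inl (by rw [hTA4, if_pos h1])


/-- Let `0 < δ < 1/4` and `d ≥ 1`.  If `f, g ∈ Homeo₊[0,1]` satisfy `d_sup(f,g) ≥ δ/d`,
then there is `x ∈ [0,1]` with either `|T_d(f x) - T_d(g x)| ≥ δ`, or
`|T_d(f x) - T_d(g x)| ≥ δ/2` and one of `T_d(f x)`, `T_d(g x)` belongs to `{0,1}`. -/
theorem tent_separation (δ : ℝ) (hδ0 : 0 < δ) (hδ : δ < 1 / 4) (d : ℕ) (hd : 1 ≤ d)
    (f g : OPH) (hfg : δ / d ≤ dist f g) :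
    ∃ x : I,
      δ ≤ |(tentI d (f.1 x) : ℝ) - (tentI d (g.1 x) : ℝ)| ∨
      (δ / 2 ≤ |(tentI d (f.1 x) : ℝ) - (tentI d (g.1 x) : ℝ)| ∧
        ((tentI d (f.1 x) : ℝ) = 0 ∨ (tentI d (f.1 x) : ℝ) = 1 ∨
         (tentI d (g.1 x) : ℝ) = 0 ∨ (tentI d (g.1 x) : ℝ) = 1)) := by
  have hcont : Continuous fun x : I => dist (f.1 x) (g.1 x) :=
    f.1.continuous.dist g.1.continuous
  obtain ⟨x₀, -, hx₀⟩ := isCompact_univ.exists_isMaxOn Set.univ_nonempty hcont.continuousOn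
  have hle : dist f g ≤ dist (f.1 x₀) (g.1 x₀) := by
    change dist (⟨(f.1 : I → I), f.1.continuous⟩ : C(I, I))
      (⟨(g.1 : I → I), g.1.continuous⟩ : C(I, I)) ≤ _
    rw [ContinuousMap.dist_le dist_nonneg]
    intro x
    exact hx₀ (Set.mem_univ x)
  have h₀ : δ / d ≤ dist (f.1 x₀) (g.1 x₀) := le_trans hfg hle
  rw [Subtype.dist_eq, Real.dist_eq] at h₀
  rcases le_total ((g.1 x₀ : ℝ)) ((f.1 x₀ : ℝ)) with hc | hc
  · have h₀' : δ / d ≤ (f.1 x₀ : ℝ) - g.1 x₀ := by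
      rwa [abs_of_nonneg (by linarith)] at h₀
    exact key δ hδ0 hδ d hd f g x₀ h₀'
  · have h₀' : δ / d ≤ (g.1 x₀ : ℝ) - f.1 x₀ := by
      rw [abs_of_nonpos (by linarith)] at h₀
      linarith
    obtain ⟨x, hx⟩ := key δ hδ0 hδ d hd g f x₀ h₀'
    refine ⟨x, ?_⟩
    rcases hx with h | ⟨h1, h2⟩
    · exact Or.inl (by rwa [abs_sub_comm])
    · exact Or.inr ⟨by rwa [abs_sub_comm], by tauto⟩


end
end
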